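/- arXiv:1001.3931 — 10 statements merged into one kernel-verified Lean document; each statement's English description precedes it below -/
import Mathlib

section
/- Let v be a Llull matrix with indirect scores s, and let ∼ be the equivalence x ∼ y iff x = y or (s_{xy} > 0 and s_{yx} > 0). If x ∼ x̄ and y ∼ ȳ with x ≁ y, then s_{xy} > 0 implies s_{x̄ȳ} > 0. Consequently the relation ≻ (defined by s_{xy} > 0) descends to the quotient by ∼ (the set of irreducible components). -/
/-- The minimum score along a path `x, z₁, …, zₖ, y` (the list gives the
intermediate points; the empty list is the direct link from `x` to `y`). -/
def chainMin {S : Type*} (v : S → S → ℝ) : S → List S → S → ℝ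
  | x, [], y => v x y
  | x, z :: l, y => min (v x z) (chainMin v z l y)

/-- Indirect (max-min) score: supremum over all paths from `x` to `y`
of the minimum direct score along the path. -/
noncomputable def iScore {S : Type*} (v : S → S → ℝ) (x y : S) : ℝ :=
  sSup {r : ℝ | ∃ l : List S, r = chainMin v x l y}

/-- A Llull matrix: preference scores in `[0,1]` with `v x y + v y x ≤ 1`. -/
def IsLlull {S : Type*} (v : S → S → ℝ) : Prop :=
  ∀ x y : S, x ≠ y → 0 ≤ v x y ∧ v x y ≤ 1 ∧ v x y + v y x ≤ 1


/-- The equivalence relation of mutual positive indirect score. -/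
def simRel {S : Type*} (v : S → S → ℝ) (x y : S) : Prop :=
  x = y ∨ (0 < iScore v x y ∧ 0 < iScore v y x)

lemma chainMin_le_head {S : Type*} (v : S → S → ℝ) (x y : S) (l : List S) :
    chainMin v x l y ≤ v x (l.headD y) := by
  cases l with
  | nil => simp [chainMin]
  | cons z l => simp [chainMin]

lemma chainMin_append {S : Type*} (v : S → S → ℝ) (x b y : S) (l1 l2 : List S) :
    chainMin v x (l1 ++ b :: l2) y = min (chainMin v x l1 b) (chainMin v b l2 y) := by
  induction l1 generalizing x with
  | nil => simp [chainMin]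
  | cons z l ih => simp [chainMin, ih, min_assoc]

lemma iScore_pos_iff {S : Type*} [Fintype S] (v : S → S → ℝ) (x y : S) :
    0 < iScore v x y ↔ ∃ l : List S, 0 < chainMin v x l y := by
  constructor
  · intro h
    by_contra hc
    push_neg at hc
    have : iScore v x y ≤ 0 := by
      apply Real.sSup_le _ le_rfl
      rintro r ⟨l, rfl⟩
      exact hc l
    linarith
  · rintro ⟨l, hl⟩
    obtain ⟨M, hM⟩ := (Set.finite_range (fun p : S × S => v p.1 p.2)).bddAbove
    have hbdd : BddAbove {r : ℝ | ∃ l : List S, r = chainMin v x l y} := by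
      refine ⟨M, ?_⟩
      rintro r ⟨l', rfl⟩
      exact le_trans (chainMin_le_head v x y l') (hM ⟨(x, l'.headD y), rfl⟩)
    have : chainMin v x l y ≤ iScore v x y := le_csSup hbdd ⟨l, rfl⟩
    linarith

lemma iScore_pos_trans {S : Type*} [Fintype S] (v : S → S → ℝ) {a b c : S}
    (h1 : 0 < iScore v a b) (h2 : 0 < iScore v b c) : 0 < iScore v a c := by
  rw [iScore_pos_iff] at h1 h2 ⊢
  obtain ⟨l1, h1⟩ := h1
  obtain ⟨l2, h2⟩ := h2
  exact ⟨l1 ++ b :: l2, by rw [chainMin_append]; exact lt_min h1 h2⟩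

/-- The relation `≻` descends to irreducible components: if `x ∼ x̄`, `y ∼ ȳ`,
`x ≁ y` and `s x y > 0`, then `s x̄ ȳ > 0`. -/
theorem stmt3 {S : Type*} [Fintype S] (v : S → S → ℝ) (hv : IsLlull v)
    (x xb y yb : S) (hx : simRel v x xb) (hy : simRel v y yb)
    (hxy : ¬ simRel v x y) (hs : 0 < iScore v x y) :
    0 < iScore v xb yb := by
  have h1 : 0 < iScore v xb y := by
    rcases hx with rfl | ⟨_, hba⟩
    · exact hs
    · exact iScore_pos_trans v hba hs
  rcases hy with rfl | ⟨hy1, _⟩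
  · exact h1
  · exact iScore_pos_trans v h1 hy1
end

section
/- Let v be an irreducible Llull matrix on a finite set S and let F(φ) = ∏_{{x,y}} φ_x^{v_{xy}} φ_y^{v_{yx}} / (φ_x + φ_y)^{t_{xy}} where t_{xy} = v_{xy} + v_{yx}, defined on the open simplex Φ = {φ : φ_x > 0 for all x, Σ φ_x = 1}. If φⁿ is a sequence in Φ converging to a point of the boundary ∂Φ (where some coordinate vanishes), then F(φⁿ) → 0. -/
open Finset in
/-- Zermelo's likelihood function
`F(φ) = ∏_{{x,y}} φ_x^{v_{xy}} φ_y^{v_{yx}} / (φ_x+φ_y)^{t_{xy}}`,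
written as a product over ordered pairs of distinct elements. -/
noncomputable def Zf {S : Type*} [Fintype S] [DecidableEq S]
    (v : S → S → ℝ) (φ : S → ℝ) : ℝ :=
  ∏ x, ∏ y ∈ Finset.univ.erase x, (φ x) ^ (v x y) / (φ x + φ y) ^ (v x y)

/-- The open simplex of normalized positive strength vectors. -/
def simplexPos (S : Type*) [Fintype S] : Set (S → ℝ) :=
  {φ | (∀ x, 0 < φ x) ∧ ∑ x, φ x = 1}

/-- Zermelo's system of equations
`Σ_{y≠x} t_{xy} φ_x/(φ_x+φ_y) = Σ_{y≠x} v_{xy}` for all `x`. -/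
def ZermeloEq {S : Type*} [Fintype S] [DecidableEq S]
    (v : S → S → ℝ) (φ : S → ℝ) : Prop :=
  ∀ x, ∑ y ∈ Finset.univ.erase x, (v x y + v y x) * (φ x / (φ x + φ y)) =
    ∑ y ∈ Finset.univ.erase x, v x y

open Finset Filter

lemma chainMin_le_one' {S : Type*} (v : S → S → ℝ) (hv : IsLlull v) :
    ∀ (l : List S) (x y : S), x ≠ y → chainMin v x l y ≤ 1
  | [], x, y, h => by simpa [chainMin] using (hv x y h).2.1
  | z :: l, x, y, h => by
    rw [chainMin]
    by_cases hxz : x = z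
    · subst hxz
      exact min_le_of_right_le (chainMin_le_one' v hv l x y h)
    · exact min_le_of_left_le (hv x z hxz).2.1

lemma chain_cross' {S : Type*} (v : S → S → ℝ) (ψ : S → ℝ) :
    ∀ (l : List S) (a b : S), 0 < chainMin v a l b → ψ a = 0 → ψ b ≠ 0 →
      ∃ p q, ψ p = 0 ∧ ψ q ≠ 0 ∧ 0 < v p q
  | [], a, b, h, ha, hb => ⟨a, b, ha, hb, by simpa [chainMin] using h⟩
  | z :: l, a, b, h, ha, hb => by
    rw [chainMin] at h
    by_cases hz : ψ z = 0
    · exact chain_cross' v ψ l z b (lt_of_lt_of_le h (min_le_right _ _)) hz hb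
    · exact ⟨a, z, ha, hz, lt_of_lt_of_le h (min_le_left _ _)⟩

lemma prod_le_single'' {ι : Type*} [DecidableEq ι] (s : Finset ι) (f : ι → ℝ)
    (h0 : ∀ i ∈ s, 0 ≤ f i) (h1 : ∀ i ∈ s, f i ≤ 1) {j : ι} (hj : j ∈ s) :
    ∏ i ∈ s, f i ≤ f j := by
  rw [← Finset.mul_prod_erase s f hj]
  have hrest : ∏ i ∈ s.erase j, f i ≤ 1 :=
    Finset.prod_le_one (fun i hi => h0 i (Finset.mem_of_mem_erase hi))
      (fun i hi => h1 i (Finset.mem_of_mem_erase hi))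
  calc f j * ∏ i ∈ s.erase j, f i ≤ f j * 1 :=
        mul_le_mul_of_nonneg_left hrest (h0 j hj)
    _ = f j := mul_one _

/-- For irreducible `v`, `F` tends to `0` along any sequence in the open simplex
converging to a boundary point. -/

theorem stmt5 {S : Type*} [Fintype S] [DecidableEq S] (hS : 2 ≤ Fintype.card S)
    (v : S → S → ℝ) (hv : IsLlull v)
    (hirr : ∀ x y : S, x ≠ y → 0 < iScore v x y)
    (φn : ℕ → S → ℝ) (hφn : ∀ n, φn n ∈ simplexPos S)
    (ψ : S → ℝ) (hψ0 : ∀ x, 0 ≤ ψ x) (hψ1 : ∑ x, ψ x = 1) (hbd : ∃ x, ψ x = 0)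
    (hconv : Filter.Tendsto φn Filter.atTop (nhds ψ)) :
    Filter.Tendsto (fun n => Zf v (φn n)) Filter.atTop (nhds 0) := by

  obtain ⟨a, ha⟩ := hbd
  have hex : ∃ b, ψ b ≠ 0 := by
    by_contra h
    push_neg at h
    simp [h] at hψ1
  obtain ⟨b, hb⟩ := hex
  have hab : a ≠ b := fun h => hb (h ▸ ha)
  have hi := hirr a b hab
  rw [iScore] at hi
  have hne : Set.Nonempty {r : ℝ | ∃ l : List S, r = chainMin v a l b} :=
    ⟨v a b, [], rfl⟩
  have hbdd : BddAbove {r : ℝ | ∃ l : List S, r = chainMin v a l b} := by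
    refine ⟨1, ?_⟩
    rintro r ⟨l, rfl⟩
    exact chainMin_le_one' v hv l a b hab
  obtain ⟨r, hrT, hr⟩ := (lt_csSup_iff hbdd hne).mp hi
  obtain ⟨l, rfl⟩ := hrT
  obtain ⟨p, q, hp, hq, hpq⟩ := chain_cross' v ψ l a b hr ha hb
  have hpqne : p ≠ q := fun h => hq (h ▸ hp)
  have hψq : 0 < ψ q := lt_of_le_of_ne (hψ0 q) (Ne.symm hq)
  have hcp : Tendsto (fun n => φn n p) atTop (nhds (ψ p)) := tendsto_pi_nhds.mp hconv p
  have hcq : Tendsto (fun n => φn n q) atTop (nhds (ψ q)) := tendsto_pi_nhds.mp hconv q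
  set c := v p q with hc
  -- the dominating factor
  set g : ℕ → ℝ := fun n => (φn n p) ^ c / (φn n p + φn n q) ^ c with hg
  have hnum : Tendsto (fun n => (φn n p) ^ c) atTop (nhds 0) := by
    have h1 : ContinuousAt (fun t : ℝ => t ^ c) (ψ p) :=
      Real.continuousAt_rpow_const (ψ p) c (Or.inr hpq.le)
    have := h1.tendsto.comp hcp
    rw [hp, Real.zero_rpow (ne_of_gt hpq)] at this
    exact this
  have hden : Tendsto (fun n => (φn n p + φn n q) ^ c) atTop (nhds ((ψ q) ^ c)) := by
    have hsum : Tendsto (fun n => φn n p + φn n q) atTop (nhds (ψ q)) := by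
      have := hcp.add hcq
      rwa [hp, zero_add] at this
    have h1 : ContinuousAt (fun t : ℝ => t ^ c) (ψ q) :=
      Real.continuousAt_rpow_const (ψ q) c (Or.inl (ne_of_gt hψq))
    exact h1.tendsto.comp hsum
  have hgto : Tendsto g atTop (nhds 0) := by
    have := hnum.div hden (ne_of_gt (Real.rpow_pos_of_pos hψq c))
    rwa [zero_div] at this
  -- pointwise bounds
  have hterm : ∀ n x y, x ≠ y →
      0 ≤ (φn n x) ^ (v x y) / (φn n x + φn n y) ^ (v x y) ∧
      (φn n x) ^ (v x y) / (φn n x + φn n y) ^ (v x y) ≤ 1 := by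
    intro n x y hxy
    obtain ⟨hpos, -⟩ := hφn n
    constructor
    · exact div_nonneg (Real.rpow_nonneg (hpos x).le _) (Real.rpow_nonneg (add_pos (hpos x) (hpos y)).le _)
    · have hx := hpos x
      have hy := hpos y
      rw [div_le_one (Real.rpow_pos_of_pos (add_pos hx hy) _)]
      exact Real.rpow_le_rpow (hpos x).le (le_add_of_nonneg_right (hpos y).le) (hv x y hxy).1
  have hzf0 : ∀ n, 0 ≤ Zf v (φn n) := by
    intro n
    apply Finset.prod_nonneg
    intro x _
    apply Finset.prod_nonneg
    intro y hy
    exact (hterm n x y (Finset.ne_of_mem_erase hy).symm).1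
  have hzfle : ∀ n, Zf v (φn n) ≤ g n := by
    intro n
    have hinner0 : ∀ x ∈ (Finset.univ : Finset S), 0 ≤ ∏ y ∈ Finset.univ.erase x,
        (φn n x) ^ (v x y) / (φn n x + φn n y) ^ (v x y) := by
      intro x _
      exact Finset.prod_nonneg fun y hy => (hterm n x y (Finset.ne_of_mem_erase hy).symm).1
    have hinner1 : ∀ x ∈ (Finset.univ : Finset S), (∏ y ∈ Finset.univ.erase x,
        (φn n x) ^ (v x y) / (φn n x + φn n y) ^ (v x y)) ≤ 1 := by
      intro x _
      exact Finset.prod_le_one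
        (fun y hy => (hterm n x y (Finset.ne_of_mem_erase hy).symm).1)
        (fun y hy => (hterm n x y (Finset.ne_of_mem_erase hy).symm).2)
    calc Zf v (φn n)
        ≤ ∏ y ∈ Finset.univ.erase p, (φn n p) ^ (v p y) / (φn n p + φn n y) ^ (v p y) :=
          prod_le_single'' Finset.univ _ hinner0 hinner1 (Finset.mem_univ p)
      _ ≤ (φn n p) ^ (v p q) / (φn n p + φn n q) ^ (v p q) :=
          prod_le_single'' (Finset.univ.erase p) _
            (fun y hy => (hterm n p y (Finset.ne_of_mem_erase hy).symm).1)
            (fun y hy => (hterm n p y (Finset.ne_of_mem_erase hy).symm).2)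
            (Finset.mem_erase.mpr ⟨hpqne.symm, Finset.mem_univ q⟩)
      _ = g n := rfl
  exact squeeze_zero hzf0 hzfle hgto
end

section
/- Let v be an irreducible Llull matrix on a finite set S. Then the function F(φ) = ∏_{{x,y}} φ_x^{v_{xy}} φ_y^{v_{yx}} / (φ_x + φ_y)^{t_{xy}} attains a maximum on the open simplex Φ = {φ : φ_x > 0, Σ φ_x = 1}. -/
/-!
`F` extends continuously to the closed simplex: at a boundary point `φ`, irreducibility gives a
path from a vanishing coordinate to a positive one, hence an edge `p → q` with
`φ p = 0 < φ q` and `v p q > 0`, and near `φ` we have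
`0 ≤ F ≤ (φ_p / (φ_p + φ_q)) ^ v_{pq} → 0`. So `F` attains a maximum on the compact closed
simplex; this maximum is positive because `F` is positive in the interior, whereas `F` vanishes
on the boundary, so every maximizer lies in the open simplex.
-/

open Finset Filter Topology

theorem Finset.prod_le_of_mem_of_le_one {ι R : Type*} [CommMonoidWithZero R] [Preorder R]
    [ZeroLEOneClass R] [PosMulMono R] {s : Finset ι} {f : ι → R} (h0 : ∀ i ∈ s, 0 ≤ f i)
    (h1 : ∀ i ∈ s, f i ≤ 1) {a : ι} (ha : a ∈ s) : ∏ i ∈ s, f i ≤ f a := by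
  simpa using prod_le_prod_of_subset_of_le_one (singleton_subset_iff.2 ha) h0
    fun i hi _ => h1 i hi

section Chains

variable {S : Type*} (v : S → S → ℝ)

theorem exists_chainMin_pos_of_iScore_pos {a b : S} (h : 0 < iScore v a b) :
    ∃ l : List S, 0 < chainMin v a l b := by
  by_contra! hcon
  exact h.not_ge (Real.sSup_nonpos fun r ⟨l, hr⟩ => hr ▸ hcon l)

theorem exists_pos_edge_of_chainMin_pos (s : Set S) :
    ∀ (l : List S) {a b : S}, a ∈ s → b ∉ s → 0 < chainMin v a l b →
      ∃ p ∈ s, ∃ q ∉ s, 0 < v p q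
  | [], a, b, ha, hb, h => ⟨a, ha, b, hb, h⟩
  | z :: l, a, _, ha, hb, h => by
    rw [chainMin, lt_min_iff] at h
    by_cases hz : z ∈ s
    · exact exists_pos_edge_of_chainMin_pos s l hz hb h.2
    · exact ⟨a, ha, z, hz, h.1⟩

end Chains

section ZermeloFactor

variable {S : Type*} {v : S → S → ℝ} {φ : S → ℝ}

noncomputable def zermeloFactor (v : S → S → ℝ) (φ : S → ℝ) (x y : S) : ℝ :=
  φ x ^ v x y / (φ x + φ y) ^ v x y

theorem zermeloFactor_nonneg (hφ : ∀ x, 0 ≤ φ x) (x y : S) : 0 ≤ zermeloFactor v φ x y :=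
  div_nonneg (Real.rpow_nonneg (hφ x) _) (Real.rpow_nonneg (add_nonneg (hφ x) (hφ y)) _)

theorem zermeloFactor_le_one (hφ : ∀ x, 0 ≤ φ x) {x y : S} (hv : 0 ≤ v x y) :
    zermeloFactor v φ x y ≤ 1 :=
  div_le_one_of_le₀ (Real.rpow_le_rpow (hφ x) (le_add_of_nonneg_right (hφ y)) hv)
    (Real.rpow_nonneg (add_nonneg (hφ x) (hφ y)) _)

theorem zermeloFactor_eq_zero {x y : S} (hx : φ x = 0) (hv : 0 < v x y) :
    zermeloFactor v φ x y = 0 := by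
  rw [zermeloFactor, hx, Real.zero_rpow hv.ne', zero_div]

theorem continuousAt_zermeloFactor {φ₀ : S → ℝ} {x y : S} (hx : φ₀ x ≠ 0 ∨ 0 ≤ v x y)
    (hxy : 0 < φ₀ x + φ₀ y) : ContinuousAt (fun φ => zermeloFactor v φ x y) φ₀ :=
  ((continuousAt_apply x φ₀).rpow_const hx).div
    (((continuousAt_apply x φ₀).add (continuousAt_apply y φ₀)).rpow_const (Or.inl hxy.ne'))
    (Real.rpow_pos_of_pos hxy _).ne'

end ZermeloFactor

theorem exists_pos_edge_of_mem_stdSimplex {S : Type*} [Fintype S] {v : S → S → ℝ}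
    {φ : S → ℝ} (hirr : ∀ x y : S, x ≠ y → 0 < iScore v x y)
    (hφ : φ ∈ stdSimplex ℝ S) {a : S} (ha : φ a = 0) :
    ∃ p q, φ p = 0 ∧ 0 < φ q ∧ 0 < v p q := by
  obtain ⟨b, hb⟩ : ∃ b, φ b ≠ 0 := by
    by_contra! h0
    simpa [h0] using hφ.2
  obtain ⟨l, hl⟩ := exists_chainMin_pos_of_iScore_pos v (hirr a b fun h => hb (h ▸ ha))
  obtain ⟨p, hp, q, hq, hpq⟩ := exists_pos_edge_of_chainMin_pos v {x | φ x = 0} l ha hb hl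
  exact ⟨p, q, hp, (hφ.1 q).lt_of_ne' hq, hpq⟩

section Zermelo

variable {S : Type*} [Fintype S] [DecidableEq S] {v : S → S → ℝ} {φ : S → ℝ}

theorem Zf_nonneg (hφ : ∀ x, 0 ≤ φ x) : 0 ≤ Zf v φ :=
  prod_nonneg fun x _ => prod_nonneg fun y _ => zermeloFactor_nonneg hφ x y

theorem Zf_pos (hφ : ∀ x, 0 < φ x) : 0 < Zf v φ :=
  prod_pos fun x _ => prod_pos fun y _ =>
    div_pos (Real.rpow_pos_of_pos (hφ x) _) (Real.rpow_pos_of_pos (add_pos (hφ x) (hφ y)) _)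

theorem Zf_le_zermeloFactor (hv : ∀ x y, x ≠ y → 0 ≤ v x y) (hφ : ∀ x, 0 ≤ φ x) {p q : S}
    (hpq : p ≠ q) : Zf v φ ≤ zermeloFactor v φ p q := by
  have h0 : ∀ x, ∀ y ∈ univ.erase x, 0 ≤ zermeloFactor v φ x y :=
    fun x y _ => zermeloFactor_nonneg hφ x y
  have h1 : ∀ x, ∀ y ∈ univ.erase x, zermeloFactor v φ x y ≤ 1 :=
    fun x y hy => zermeloFactor_le_one hφ (hv x y (ne_of_mem_erase hy).symm)
  calc Zf v φ ≤ ∏ y ∈ univ.erase p, zermeloFactor v φ p y :=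
        prod_le_of_mem_of_le_one (fun x _ => prod_nonneg (h0 x))
          (fun x _ => prod_le_one (h0 x) (h1 x)) (mem_univ p)
    _ ≤ zermeloFactor v φ p q := prod_le_of_mem_of_le_one (h0 p) (h1 p) (by simp [hpq.symm])

theorem Zf_eq_zero {p q : S} (hp : φ p = 0) (hq : 0 < φ q) (hpq : 0 < v p q) : Zf v φ = 0 :=
  prod_eq_zero (mem_univ p) <|
    prod_eq_zero (mem_erase.2 ⟨fun h : q = p => hq.ne' (h ▸ hp), mem_univ q⟩)
      (zermeloFactor_eq_zero hp hpq)

theorem continuousAt_Zf_of_pos {φ₀ : S → ℝ} (hφ₀ : ∀ x, 0 < φ₀ x) : ContinuousAt (Zf v) φ₀ :=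
  tendsto_finsetProd _ fun x _ => tendsto_finsetProd _ fun y _ =>
    continuousAt_zermeloFactor (Or.inl (hφ₀ x).ne') (add_pos (hφ₀ x) (hφ₀ y))

theorem tendsto_Zf_nhdsWithin_stdSimplex_zero (hv : ∀ x y, x ≠ y → 0 ≤ v x y) {φ₀ : S → ℝ}
    {p q : S} (hp : φ₀ p = 0) (hq : 0 < φ₀ q) (hpq : 0 < v p q) :
    Tendsto (Zf v) (𝓝[stdSimplex ℝ S] φ₀) (𝓝 0) := by
  have hfactor : Tendsto (fun φ => zermeloFactor v φ p q) (𝓝 φ₀) (𝓝 0) := by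
    simpa [ContinuousAt, zermeloFactor_eq_zero hp hpq] using
      continuousAt_zermeloFactor (φ₀ := φ₀) (Or.inr hpq.le) (by rwa [hp, zero_add])
  refine squeeze_zero' ?_ ?_ (hfactor.mono_left nhdsWithin_le_nhds)
  · filter_upwards [self_mem_nhdsWithin] with φ hφ using Zf_nonneg hφ.1
  · filter_upwards [self_mem_nhdsWithin] with φ hφ
      using Zf_le_zermeloFactor hv hφ.1 fun h => hq.ne' (h ▸ hp)

theorem continuousOn_Zf_stdSimplex (hv : ∀ x y, x ≠ y → 0 ≤ v x y)
    (hirr : ∀ x y : S, x ≠ y → 0 < iScore v x y) : ContinuousOn (Zf v) (stdSimplex ℝ S) := by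
  intro φ₀ hφ₀
  by_cases h : ∃ a, φ₀ a = 0
  · obtain ⟨a, ha⟩ := h
    obtain ⟨p, q, hp, hq, hpq⟩ := exists_pos_edge_of_mem_stdSimplex hirr hφ₀ ha
    rw [ContinuousWithinAt, Zf_eq_zero hp hq hpq]
    exact tendsto_Zf_nhdsWithin_stdSimplex_zero hv hp hq hpq
  · simp only [not_exists] at h
    exact (continuousAt_Zf_of_pos fun x => (hφ₀.1 x).lt_of_ne' (h x)).continuousWithinAt

end Zermelo

theorem simplexPos_subset_stdSimplex (S : Type*) [Fintype S] :
    simplexPos S ⊆ stdSimplex ℝ S :=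
  fun _ hφ => ⟨fun x => (hφ.1 x).le, hφ.2⟩

theorem simplexPos_nonempty (S : Type*) [Fintype S] [Nonempty S] : (simplexPos S).Nonempty :=
  ⟨fun _ => (Fintype.card S : ℝ)⁻¹, fun _ => by positivity, by simp⟩

/-- For irreducible `v`, `F` attains a maximum on the open simplex. -/
theorem stmt6 {S : Type*} [Fintype S] [DecidableEq S] (hS : 2 ≤ Fintype.card S)
    (v : S → S → ℝ) (hv : IsLlull v)
    (hirr : ∀ x y : S, x ≠ y → 0 < iScore v x y) :
    ∃ φ ∈ simplexPos S, ∀ ψ ∈ simplexPos S, Zf v ψ ≤ Zf v φ := by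
  have : Nonempty S := Fintype.card_pos_iff.mp (by omega)
  obtain ⟨φ₁, hφ₁⟩ := simplexPos_nonempty S
  obtain ⟨φ, hφ, hmax⟩ := (isCompact_stdSimplex ℝ S).exists_isMaxOn
    ⟨φ₁, simplexPos_subset_stdSimplex S hφ₁⟩
    (continuousOn_Zf_stdSimplex (fun x y h => (hv x y h).1) hirr)
  have hpos : 0 < Zf v φ :=
    (Zf_pos hφ₁.1).trans_le (hmax (simplexPos_subset_stdSimplex S hφ₁))
  refine ⟨φ, ⟨fun x => (hφ.1 x).lt_of_ne' fun hx => ?_, hφ.2⟩,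
    fun ψ hψ => hmax (simplexPos_subset_stdSimplex S hψ)⟩
  obtain ⟨p, q, hp, hq, hpq⟩ := exists_pos_edge_of_mem_stdSimplex hirr hφ hx
  exact hpos.ne' (Zf_eq_zero hp hq hpq)
end

section
/- Let v be an irreducible Llull matrix and φ ∈ (0,∞)^S a solution of the Zermelo equations Σ_{y≠x} t_{xy} φ_x/(φ_x+φ_y) = Σ_{y≠x} v_{xy}. Then the Hessian quadratic form of log F at φ satisfies Σ_{x,y} (∂² log F/∂φ_x∂φ_y) ψ_x ψ_y = − Σ_{{x,y}} t_{xy}/((φ_x+φ_y)² φ_x φ_y) · (φ_y ψ_x − φ_x ψ_y)², and this is strictly negative for every ψ with Σ_x ψ_x = 0 and ψ ≠ 0. -/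
/-!
On `φ > 0`, `log F = ∑_{x ≠ y} v_{xy} (log φ_x − log (φ_x+φ_y))`, so its Hessian form
is `∑_{x ≠ y} v_{xy} ((ψ_x+ψ_y)²/(φ_x+φ_y)² − ψ_x²/φ_x²)`. Zermelo's equation at `x`
trades `∑_y v_{xy}` for `∑_y t_{xy} φ_x/(φ_x+φ_y)` in the `ψ_x²/φ_x²` part, after which
symmetrizing each pair `{x, y}` gives the negative sum of squares. If that sum vanishes, then
`ψ_x/φ_x = ψ_y/φ_y` whenever `v_{xy} > 0`, hence, along paths of positive score, for all `x, y`
by irreducibility; so `ψ` is a multiple of `φ`, and `∑ ψ = 0` forces `ψ = 0`.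
-/

open Finset

section LogLinear

variable {E : Type*} [NormedAddCommGroup E] [NormedSpace ℝ E] (ℓ : E →L[ℝ] ℝ) {θ : E}

lemma hasFDerivAt_log_clm (h : ℓ θ ≠ 0) :
    HasFDerivAt (fun θ => Real.log (ℓ θ)) ((ℓ θ)⁻¹ • ℓ) θ :=
  ℓ.hasFDerivAt.log h

lemma hasFDerivAt_inv_smul_clm (h : ℓ θ ≠ 0) :
    HasFDerivAt (fun θ => (ℓ θ)⁻¹ • ℓ) ((-(ℓ θ ^ 2)⁻¹ • ℓ).smulRight ℓ) θ :=
  ((hasDerivAt_inv h).comp_hasFDerivAt θ ℓ.hasFDerivAt).smul_const ℓ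

end LogLinear

lemma eventually_pos_nhds {S : Type*} [Finite S] {φ : S → ℝ} (hφ : ∀ x, 0 < φ x) :
    ∀ᶠ θ in nhds φ, ∀ x, 0 < θ x :=
  Filter.eventually_all.2 fun x =>
    (continuous_apply x).continuousAt.eventually (lt_mem_nhds (hφ x))

section Hessian

variable {S : Type*} [Fintype S] [DecidableEq S] (v : S → S → ℝ)

local notation "coord" => ContinuousLinearMap.proj (R := ℝ) (φ := fun _ : S => ℝ)

lemma log_Zf_eq {θ : S → ℝ} (hθ : ∀ x, 0 < θ x) :
    Real.log (Zf v θ) =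
      ∑ x, ∑ y ∈ univ.erase x, v x y * (Real.log (θ x) - Real.log (θ x + θ y)) := by
  have hsum : ∀ x y, 0 < θ x + θ y := fun x y => add_pos (hθ x) (hθ y)
  have hterm : ∀ x y, θ x ^ v x y / (θ x + θ y) ^ v x y ≠ 0 := fun x y =>
    (div_pos (Real.rpow_pos_of_pos (hθ x) _) (Real.rpow_pos_of_pos (hsum x y) _)).ne'
  unfold Zf
  rw [Real.log_prod fun x _ => prod_ne_zero_iff.mpr fun y _ => hterm x y]
  refine sum_congr rfl fun x _ => ?_
  rw [Real.log_prod fun y _ => hterm x y]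
  refine sum_congr rfl fun y _ => ?_
  rw [Real.log_div (Real.rpow_pos_of_pos (hθ x) _).ne' (Real.rpow_pos_of_pos (hsum x y) _).ne',
    Real.log_rpow (hθ x), Real.log_rpow (hsum x y), mul_sub]

noncomputable def logZfGrad (θ : S → ℝ) : (S → ℝ) →L[ℝ] ℝ :=
  ∑ x, ∑ y ∈ univ.erase x,
    v x y • ((θ x)⁻¹ • coord x - (θ x + θ y)⁻¹ • (coord x + coord y))

lemma hasFDerivAt_log_Zf {θ : S → ℝ} (hθ : ∀ x, 0 < θ x) :
    HasFDerivAt (fun θ => Real.log (Zf v θ)) (logZfGrad v θ) θ := by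
  have hL : HasFDerivAt
      (fun θ : S → ℝ =>
        ∑ x, ∑ y ∈ univ.erase x, v x y * (Real.log (θ x) - Real.log (θ x + θ y)))
      (logZfGrad v θ) θ :=
    HasFDerivAt.fun_sum fun x _ => HasFDerivAt.fun_sum fun y _ =>
      ((hasFDerivAt_log_clm (coord x) (hθ x).ne').sub
        (hasFDerivAt_log_clm (coord x + coord y) (add_pos (hθ x) (hθ y)).ne')).const_mul (v x y)
  exact hL.congr_of_eventuallyEq ((eventually_pos_nhds hθ).mono fun θ' hθ' => log_Zf_eq v hθ')

lemma hasFDerivAt_logZfGrad {φ : S → ℝ} (hφ : ∀ x, 0 < φ x) :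
    HasFDerivAt (logZfGrad v)
      (∑ x, ∑ y ∈ univ.erase x, v x y •
        ((-(φ x ^ 2)⁻¹ • coord x).smulRight (coord x) -
          (-((φ x + φ y) ^ 2)⁻¹ • (coord x + coord y)).smulRight (coord x + coord y))) φ :=
  HasFDerivAt.fun_sum fun x _ => HasFDerivAt.fun_sum fun y _ =>
    ((hasFDerivAt_inv_smul_clm (coord x) (hφ x).ne').sub
      (hasFDerivAt_inv_smul_clm (coord x + coord y) (add_pos (hφ x) (hφ y)).ne')).fun_const_smul
        (v x y)

lemma iteratedFDeriv_two_log_Zf_apply {φ : S → ℝ} (hφ : ∀ x, 0 < φ x) (ψ : S → ℝ) :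
    iteratedFDeriv ℝ 2 (fun θ => Real.log (Zf v θ)) φ ![ψ, ψ] =
      ∑ x, ∑ y ∈ univ.erase x,
        v x y * ((ψ x + ψ y) ^ 2 / (φ x + φ y) ^ 2 - ψ x ^ 2 / φ x ^ 2) := by
  have hgrad : fderiv ℝ (fun θ => Real.log (Zf v θ)) =ᶠ[nhds φ] logZfGrad v :=
    (eventually_pos_nhds hφ).mono fun θ hθ => (hasFDerivAt_log_Zf v hθ).fderiv
  rw [iteratedFDeriv_two_apply, hgrad.fderiv_eq, (hasFDerivAt_logZfGrad v hφ).fderiv]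
  simp only [_root_.sum_apply, _root_.smul_apply, _root_.sub_apply, _root_.add_apply,
    ContinuousLinearMap.smulRight_apply, ContinuousLinearMap.proj_apply, smul_eq_mul,
    Matrix.cons_val_zero, Matrix.cons_val_one]
  refine sum_congr rfl fun x _ => sum_congr rfl fun y _ => ?_
  have := hφ x; have := hφ y
  field_simp
  ring

end Hessian

section Symmetrization

variable {S R : Type*} [Fintype S] [DecidableEq S]

lemma sum_erase_comm [AddCommMonoid R] (f : S → S → R) :
    ∑ x, ∑ y ∈ univ.erase x, f x y = ∑ x, ∑ y ∈ univ.erase x, f y x :=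
  sum_comm' fun x y => by simp [ne_comm]

lemma two_mul_sum_erase [NonAssocSemiring R] (f : S → S → R) :
    2 * ∑ x, ∑ y ∈ univ.erase x, f x y = ∑ x, ∑ y ∈ univ.erase x, (f x y + f y x) := by
  simp only [sum_add_distrib]
  rw [← sum_erase_comm f, two_mul]

end Symmetrization

section Paths

variable {S α : Type*} {v : S → S → ℝ} {f : S → α}

lemma eq_of_pos_chainMin (hf : ∀ x y, 0 < v x y → f x = f y) :
    ∀ (l : List S) {x y : S}, 0 < chainMin v x l y → f x = f y
  | [], x, y, h => hf x y h
  | z :: l, x, _, h => (hf x z (h.trans_le (min_le_left _ _))).trans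
      (eq_of_pos_chainMin hf l (h.trans_le (min_le_right _ _)))

lemma eq_of_pos_iScore (hf : ∀ x y, 0 < v x y → f x = f y) {x y : S} (h : 0 < iScore v x y) :
    f x = f y := by
  obtain ⟨_, ⟨l, rfl⟩, hl⟩ :=
    exists_lt_of_lt_csSup (s := {r | ∃ l, r = chainMin v x l y}) ⟨v x y, [], rfl⟩ h
  exact eq_of_pos_chainMin hf l hl

end Paths

lemma eq_zero_of_div_eq_div {S : Type*} [Fintype S] {φ ψ : S → ℝ} (hφ : ∀ x, 0 < φ x)
    (hratio : ∀ x y, ψ x / φ x = ψ y / φ y) (hsum : ∑ x, ψ x = 0) : ψ = 0 := by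
  funext y
  have hφsum : 0 < ∑ x, φ x := sum_pos (fun x _ => hφ x) ⟨y, mem_univ y⟩
  have hscale : ψ y / φ y * ∑ x, φ x = 0 := by
    rw [mul_sum, ← hsum]
    exact sum_congr rfl fun x _ => by rw [← hratio x y, div_mul_cancel₀ _ (hφ x).ne']
  simpa [(hφ y).ne'] using (mul_eq_zero.1 hscale).resolve_right hφsum.ne'

noncomputable def hessTerm {S : Type*} (v : S → S → ℝ) (φ ψ : S → ℝ) (x y : S) : ℝ :=
  (v x y + v y x) / ((φ x + φ y) ^ 2 * φ x * φ y) * (φ y * ψ x - φ x * ψ y) ^ 2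

section HessTerm

variable {S : Type*} {v : S → S → ℝ} {φ : S → ℝ} (ψ : S → ℝ)

lemma hessTerm_nonneg (hv : IsLlull v) (hφ : ∀ x, 0 < φ x) {x y : S} (hxy : x ≠ y) :
    0 ≤ hessTerm v φ ψ x y := by
  have := hφ x; have := hφ y
  exact mul_nonneg (div_nonneg (add_nonneg (hv x y hxy).1 (hv y x hxy.symm).1) (by positivity))
    (sq_nonneg _)

lemma div_eq_div_of_hessTerm_eq_zero (hv : IsLlull v) (hφ : ∀ x, 0 < φ x) {x y : S}
    (hxy : x ≠ y) (hpos : 0 < v x y) (h : hessTerm v φ ψ x y = 0) :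
    ψ x / φ x = ψ y / φ y := by
  have := hφ x; have := hφ y
  have hweight : 0 < (v x y + v y x) / ((φ x + φ y) ^ 2 * φ x * φ y) :=
    div_pos (by linarith [(hv y x hxy.symm).1]) (by positivity)
  have hcross : φ y * ψ x - φ x * ψ y = 0 := by
    simpa [hessTerm, hweight.ne'] using h
  rw [div_eq_div_iff (hφ x).ne' (hφ y).ne']
  linear_combination hcross

variable [Fintype S] [DecidableEq S]

lemma sum_hessian_eq_neg_half_sum_hessTerm (hφ : ∀ x, 0 < φ x) (heq : ZermeloEq v φ) :
    ∑ x, ∑ y ∈ univ.erase x,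
        v x y * ((ψ x + ψ y) ^ 2 / (φ x + φ y) ^ 2 - ψ x ^ 2 / φ x ^ 2) =
      -(1 / 2) * ∑ x, ∑ y ∈ univ.erase x, hessTerm v φ ψ x y := by
  set G : S → S → ℝ := fun x y => v x y * (ψ x + ψ y) ^ 2 / (φ x + φ y) ^ 2
    - (v x y + v y x) * (φ x / (φ x + φ y)) * (ψ x ^ 2 / φ x ^ 2) with hG
  have hzermelo : ∀ x, ∑ y ∈ univ.erase x,
      v x y * ((ψ x + ψ y) ^ 2 / (φ x + φ y) ^ 2 - ψ x ^ 2 / φ x ^ 2) =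
      ∑ y ∈ univ.erase x, G x y := by
    intro x
    rw [hG, sum_sub_distrib, ← sum_mul, heq x, sum_mul, ← sum_sub_distrib]
    exact sum_congr rfl fun y _ => by ring
  have hpair : ∀ x y, G x y + G y x = -hessTerm v φ ψ x y := by
    intro x y
    have := hφ x; have := hφ y
    simp only [hG, hessTerm]
    field_simp
    ring
  have hsym := two_mul_sum_erase G
  simp only [hpair, sum_neg_distrib] at hsym
  rw [sum_congr rfl fun x _ => hzermelo x]
  linarith

lemma sum_hessTerm_pos (hv : IsLlull v) (hφ : ∀ x, 0 < φ x)
    (hirr : ∀ x y : S, x ≠ y → 0 < iScore v x y) (hsum : ∑ x, ψ x = 0) (hne : ψ ≠ 0) :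
    0 < ∑ x, ∑ y ∈ univ.erase x, hessTerm v φ ψ x y := by
  have hnn : ∀ x, ∀ y ∈ univ.erase x, 0 ≤ hessTerm v φ ψ x y := fun x y hy =>
    hessTerm_nonneg ψ hv hφ (ne_of_mem_erase hy).symm
  refine (sum_nonneg fun x _ => sum_nonneg (hnn x)).lt_of_ne fun h0 => hne ?_
  have hzero : ∀ x, ∀ y ∈ univ.erase x, hessTerm v φ ψ x y = 0 := fun x =>
    (sum_eq_zero_iff_of_nonneg (hnn x)).1
      ((sum_eq_zero_iff_of_nonneg fun x _ => sum_nonneg (hnn x)).1 h0.symm x (mem_univ x))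
  have hedge : ∀ x y, 0 < v x y → ψ x / φ x = ψ y / φ y := by
    intro x y hpos
    rcases eq_or_ne x y with rfl | hxy
    · rfl
    · exact div_eq_div_of_hessTerm_eq_zero ψ hv hφ hxy hpos
        (hzero x y (mem_erase.2 ⟨hxy.symm, mem_univ y⟩))
  refine eq_zero_of_div_eq_div hφ (fun x y => ?_) hsum
  rcases eq_or_ne x y with rfl | hxy
  · rfl
  · exact eq_of_pos_iScore hedge (hirr x y hxy)

end HessTerm

theorem stmt8_general {S : Type*} [Fintype S] [DecidableEq S]
    (v : S → S → ℝ) (hv : IsLlull v)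
    (hirr : ∀ x y : S, x ≠ y → 0 < iScore v x y)
    (φ : S → ℝ) (hφ : ∀ x, 0 < φ x) (heq : ZermeloEq v φ) (ψ : S → ℝ) :
    (iteratedFDeriv ℝ 2 (fun θ : S → ℝ => Real.log (Zf v θ)) φ) ![ψ, ψ] =
      - (1/2) * ∑ x, ∑ y ∈ Finset.univ.erase x,
        (v x y + v y x) / ((φ x + φ y)^2 * φ x * φ y) * (φ y * ψ x - φ x * ψ y)^2 ∧
    (∑ x, ψ x = 0 → ψ ≠ 0 →
      (iteratedFDeriv ℝ 2 (fun θ : S → ℝ => Real.log (Zf v θ)) φ) ![ψ, ψ] < 0) := by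
  have hessian := (iteratedFDeriv_two_log_Zf_apply v hφ ψ).trans
    (sum_hessian_eq_neg_half_sum_hessTerm ψ hφ heq)
  refine ⟨hessian, fun hsum hne => ?_⟩
  rw [hessian]
  linarith [sum_hessTerm_pos ψ hv hφ hirr hsum hne]

/-- At a critical point of `log F`, the Hessian quadratic form equals
`− Σ_{{x,y}} t_{xy}/((φ_x+φ_y)² φ_x φ_y) (φ_y ψ_x − φ_x ψ_y)²`
(the unordered-pair sum written as half the ordered sum), and it is strictly
negative on nonzero directions `ψ` with `Σ ψ_x = 0`. -/
theorem stmt8 {S : Type*} [Fintype S] [DecidableEq S] (hS : 2 ≤ Fintype.card S)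
    (v : S → S → ℝ) (hv : IsLlull v)
    (hirr : ∀ x y : S, x ≠ y → 0 < iScore v x y)
    (φ : S → ℝ) (hφ : ∀ x, 0 < φ x) (heq : ZermeloEq v φ) (ψ : S → ℝ) :
    (iteratedFDeriv ℝ 2 (fun θ : S → ℝ => Real.log (Zf v θ)) φ) ![ψ, ψ] =
      - (1/2) * ∑ x, ∑ y ∈ Finset.univ.erase x,
        (v x y + v y x) / ((φ x + φ y)^2 * φ x * φ y) * (φ y * ψ x - φ x * ψ y)^2 ∧
    (∑ x, ψ x = 0 → ψ ≠ 0 →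
      (iteratedFDeriv ℝ 2 (fun θ : S → ℝ => Real.log (Zf v θ)) φ) ![ψ, ψ] < 0) :=
  stmt8_general v hv hirr φ hφ heq ψ
end

section
/- Let v be a Llull matrix with CLC structure with respect to a total order ξ on S. Then for all x, y, z with x before y in ξ and z ∉ {x,y}: v_{xz} ≥ v_{yz} and v_{zx} ≤ v_{zy}. -/
/-- CLC structure with respect to the linear order on `S` (the admissible order ξ):
(1) `v x y ≥ v y x` for `x < y`; (2) `v x z = max (v x y) (v y z)` and
(3) `v z x = min (v z y) (v y x)` for `x < y < z`; (4) `0 ≤ t x z − t x' z ≤ m x x'`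
for `z ∉ {x, x'}` where `x'` is the immediate successor (`x ⋖ x'`),
`t x y = v x y + v y x` and `m x y = v x y − v y x`. -/
def CLC {S : Type*} [LinearOrder S] (v : S → S → ℝ) : Prop :=
  (∀ x y : S, x < y → v y x ≤ v x y) ∧
  (∀ x y z : S, x < y → y < z → v x z = max (v x y) (v y z)) ∧
  (∀ x y z : S, x < y → y < z → v z x = min (v z y) (v y x)) ∧
  (∀ x x' z : S, x ⋖ x' → z ≠ x → z ≠ x' →
    0 ≤ (v x z + v z x) - (v x' z + v z x') ∧
    (v x z + v z x) - (v x' z + v z x') ≤ v x x' - v x' x)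

/-- For a Llull matrix with CLC structure: `v x z ≥ v y z` and `v z x ≤ v z y`
whenever `x < y` and `z ∉ {x, y}`. -/
theorem stmt12 {S : Type*} [LinearOrder S] [Fintype S]
    (v : S → S → ℝ) (hv : IsLlull v) (hclc : CLC v) :
    ∀ x y z : S, x < y → z ≠ x → z ≠ y → v y z ≤ v x z ∧ v z x ≤ v z y := by
  obtain ⟨h1, h2, h3, h4⟩ := hclc
  -- monotonicity when all three are comparable via (2)/(3)
  have clA : ∀ a b c : S, a < b → b < c → v b c ≤ v a c ∧ v c a ≤ v c b := by
    intro a b c hab hbc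
    constructor
    · rw [h2 a b c hab hbc]; exact le_max_right _ _
    · rw [h3 a b c hab hbc]; exact min_le_left _ _
  have clB : ∀ a b c : S, a < b → b < c → v c a ≤ v b a ∧ v a b ≤ v a c := by
    intro a b c hab hbc
    constructor
    · rw [h3 a b c hab hbc]; exact min_le_right _ _
    · rw [h2 a b c hab hbc]; exact le_max_left _ _
  -- the crossing lemma for consecutive covers p ⋖ z ⋖ q
  have cross : ∀ p z q : S, p ⋖ z → z ⋖ q → v q z ≤ v p z ∧ v z p ≤ v z q := by
    intro p z q hpz hzq
    have hpz' : p < z := hpz.lt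
    have hzq' : z < q := hzq.lt
    have hpq' : p < q := hpz'.trans hzq'
    have e1 := h2 p z q hpz' hzq'
    have e2 := h3 p z q hpz' hzq'
    have hA : v z p ≤ v p z := h1 p z hpz'
    have hB : v q z ≤ v z q := h1 z q hzq'
    obtain ⟨g1, g2⟩ := h4 p z q hpz (ne_of_gt hpq') (ne_of_gt hzq')
    obtain ⟨g3, g4⟩ := h4 z q p hzq hpz'.ne hpq'.ne
    constructor
    · by_contra h
      push_neg at h
      have hmax : max (v p z) (v z q) = v z q := max_eq_right (le_trans h.le hB)
      have hmin : min (v q z) (v z p) = v z p := min_eq_right (le_trans hA h.le)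
      rw [hmax] at e1
      rw [hmin] at e2
      linarith
    · by_contra h
      push_neg at h
      have hmax : max (v p z) (v z q) = v p z := max_eq_left (le_trans h.le hA)
      have hmin : min (v q z) (v z p) = v q z := min_eq_left (le_trans hB h.le)
      rw [hmax] at e1
      rw [hmin] at e2
      linarith
  intro x y z hxy hzx hzy
  rcases lt_trichotomy z x with hlt | heq | hgt
  · -- z < x < y
    exact ⟨(clB z x y hlt hxy).1, (clB z x y hlt hxy).2⟩
  · exact absurd heq hzx
  · rcases lt_trichotomy z y with hzy' | heq | hgt'
    · -- x < z < y : the crossing case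
      set P : Finset S := Finset.univ.filter (fun w => w < z) with hP
      have hxP : x ∈ P := by simp [hP, hgt]
      have hPne : P.Nonempty := ⟨x, hxP⟩
      set p := P.max' hPne with hpdef
      have hp_lt : p < z := (Finset.mem_filter.mp (P.max'_mem hPne)).2
      have hxp : x ≤ p := P.le_max' x hxP
      have hcov1 : p ⋖ z := by
        refine ⟨hp_lt, fun c hc hcz => ?_⟩
        exact absurd (P.le_max' c (by simp [hP, hcz])) (not_le.mpr hc)
      set Q : Finset S := Finset.univ.filter (fun w => z < w) with hQ
      have hyQ : y ∈ Q := by simp [hQ, hzy']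
      have hQne : Q.Nonempty := ⟨y, hyQ⟩
      set q := Q.min' hQne with hqdef
      have hq_gt : z < q := (Finset.mem_filter.mp (Q.min'_mem hQne)).2
      have hqy : q ≤ y := Q.min'_le y hyQ
      have hcov2 : z ⋖ q := by
        refine ⟨hq_gt, fun c hzc hcq => ?_⟩
        exact absurd (Q.min'_le c (by simp [hQ, hzc])) (not_le.mpr hcq)
      obtain ⟨c1, c2⟩ := cross p z q hcov1 hcov2
      have hyq : v y z ≤ v q z ∧ v z q ≤ v z y := by
        rcases eq_or_lt_of_le hqy with h | h
        · rw [h]; exact ⟨le_refl _, le_refl _⟩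
        · exact ⟨(clB z q y hq_gt h).1, (clB z q y hq_gt h).2⟩
      have hpx : v p z ≤ v x z ∧ v z x ≤ v z p := by
        rcases eq_or_lt_of_le hxp with h | h
        · rw [h]; exact ⟨le_refl _, le_refl _⟩
        · exact ⟨(clA x p z h hp_lt).1, (clA x p z h hp_lt).2⟩
      exact ⟨le_trans hyq.1 (le_trans c1 hpx.1), le_trans hpx.2 (le_trans c2 hyq.2)⟩
    · exact absurd heq hzy
    · -- x < y < z
      exact ⟨(clA x y z hxy hgt').1, (clA x y z hxy hgt').2⟩
end

section
/- Let v be a non-vanishing Llull matrix with CLC structure on (S, ξ). Define X = {x ∈ S : v_{p'p} > 0 for all p <_ξ x} if some v_{p'p} > 0, and X = {a} (the ξ-minimum) otherwise. Then: (i) v_{yx} = 0 whenever x ∈ X and y ∉ X; (ii) v_{xy} > 0 whenever x ∈ X and y ≠ x. In particular X is the top dominant irreducible component of v. -/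
/-- The candidate top dominant component: the set of `x` such that `v p' p > 0`
for every `p` below `x` (where `p'` is the immediate successor of `p`).
When some `v p' p > 0` fails for all covering pairs this set reduces to the
ξ-minimum, in accordance with the definition in the paper. -/
def clcTop {S : Type*} [LinearOrder S] (v : S → S → ℝ) : Set S :=
  {x | ∀ p p' : S, p < x → p ⋖ p' → 0 < v p' p}

/-!
By condition (3) a backward score `v z x` (`x < z`) is the minimum of the backward scores of the
covering links between `x` and `z`, and by (2) a forward score is the maximum of the forward
link scores. Hence `v y x = 0` as soon as some link `p ⋖ p'` between `x` and `y` has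
`v p' p = 0`, which gives (i), while `v x p > 0` for `x ∈ X` and `p < x`. For (ii) with `x < y`,
`v x y = 0` kills the link `x ⋖ x'` in both directions, and condition (4) spreads a dead link:
downwards it kills `v x p` for `p < x`, contradicting the above; upwards it kills every link above
`x`, so that when `x` is the minimum the whole matrix vanishes. Finally no path can leave `X` and
come back, which gives the statements on indirect scores.
-/

section Covering

variable {α : Type*} [LinearOrder α] [Finite α]

theorem le_induction_of_covBy {P : α → Prop} {a : α} (base : P a)
    (step : ∀ p q, a ≤ p → p ⋖ q → P p → P q) {b : α} (hab : a ≤ b) : P b := by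
  induction b using WellFoundedLT.induction with
  | ind b ih =>
    rcases hab.eq_or_lt with rfl | hlt
    · exact base
    · obtain ⟨p, hap, hpb⟩ := exists_le_covBy_of_lt hlt
      exact step p b hap hpb (ih p hpb.lt hap)

theorem ge_induction_of_covBy {P : α → Prop} {a : α} (base : P a)
    (step : ∀ p q, p ⋖ q → q ≤ a → P q → P p) {b : α} (hba : b ≤ a) : P b := by
  induction b using WellFoundedGT.induction with
  | ind b ih =>
    rcases hba.eq_or_lt with rfl | hlt
    · exact base
    · obtain ⟨q, hbq, hqa⟩ := exists_covBy_le_of_lt hlt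
      exact step b q hbq hqa (ih q hbq.lt hqa)

end Covering

section

variable {S : Type*} {v : S → S → ℝ}

theorem IsLlull.nonneg (hv : IsLlull v) {x y : S} (h : x ≠ y) : 0 ≤ v x y := (hv x y h).1

namespace CLC

variable [LinearOrder S] {x y z w : S}

theorem backward_le_forward (h : CLC v) (hxy : x < y) : v y x ≤ v x y := h.1 x y hxy

theorem forward_eq_max (h : CLC v) (hxy : x < y) (hyz : y < z) :
    v x z = max (v x y) (v y z) := h.2.1 x y z hxy hyz

theorem backward_eq_min (h : CLC v) (hxy : x < y) (hyz : y < z) :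
    v z x = min (v z y) (v y x) := h.2.2.1 x y z hxy hyz

theorem total_le_total (h : CLC v) (hx : x ⋖ y) (hzx : z ≠ x) (hzy : z ≠ y) :
    v y z + v z y ≤ v x z + v z x := by
  linarith [(h.2.2.2 x y z hx hzx hzy).1]

theorem total_sub_total_le (h : CLC v) (hx : x ⋖ y) (hzx : z ≠ x) (hzy : z ≠ y) :
    v x z + v z x - (v y z + v z y) ≤ v x y - v y x :=
  (h.2.2.2 x y z hx hzx hzy).2

theorem backward_le_of_le (h : CLC v) (hxw : x ≤ w) (hwy : w < y) (hyz : y ≤ z) :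
    v z x ≤ v y w := by
  calc v z x ≤ v y x := by
        rcases hyz.eq_or_lt with rfl | hyz
        · exact le_rfl
        · rw [h.backward_eq_min (hxw.trans_lt hwy) hyz]
          exact min_le_right _ _
    _ ≤ v y w := by
        rcases hxw.eq_or_lt with rfl | hxw
        · exact le_rfl
        · rw [h.backward_eq_min hxw hwy]
          exact min_le_left _ _

theorem forward_le_of_le (h : CLC v) (hxw : x ≤ w) (hwy : w < y) (hyz : y ≤ z) :
    v w y ≤ v x z := by
  calc v w y ≤ v w z := by
        rcases hyz.eq_or_lt with rfl | hyz
        · exact le_rfl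
        · rw [h.forward_eq_max hwy hyz]
          exact le_max_left _ _
    _ ≤ v x z := by
        rcases hxw.eq_or_lt with rfl | hxw
        · exact le_rfl
        · rw [h.forward_eq_max hxw (hwy.trans_le hyz)]
          exact le_max_right _ _

theorem backward_eq_zero_of_forward_eq_zero (hv : IsLlull v) (h : CLC v) (hxy : x < y)
    (h0 : v x y = 0) : v y x = 0 :=
  le_antisymm (h0 ▸ h.backward_le_forward hxy) (hv.nonneg hxy.ne')

theorem forward_eq_zero_of_covBy_of_covBy (hv : IsLlull v) (h : CLC v) (hxy : x ⋖ y)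
    (hyz : y ⋖ z) (h0 : v x y = 0) : v y z = 0 := by
  have hxz : x < z := hxy.lt.trans hyz.lt
  have htotal := h.total_le_total hyz hxy.lt.ne hxz.ne
  have hmono : v y z ≤ v x z := h.forward_le_of_le hxy.lt.le hyz.lt le_rfl
  have hyx := h.backward_eq_zero_of_forward_eq_zero hv hxy.lt h0
  linarith [hv.nonneg hxz.ne', hv.nonneg hyz.lt.ne]

theorem backward_eq_zero_of_lt_of_covBy (hv : IsLlull v) (h : CLC v) (hwx : w < x)
    (hxy : x ⋖ y) (h0 : v x y = 0) : v x w = 0 := by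
  have hwy : w < y := hwx.trans hxy.lt
  have htotal := h.total_sub_total_le hxy hwx.ne hwy.ne
  have hyw : v y w ≤ v y x := h.backward_le_of_le hwx.le hxy.lt le_rfl
  have hwy_eq : v w y = v w x := by
    rw [h.forward_eq_max hwx hxy.lt, h0, max_eq_left (hv.nonneg hwx.ne)]
  have hyx := h.backward_eq_zero_of_forward_eq_zero hv hxy.lt h0
  exact le_antisymm (by linarith) (hv.nonneg hwx.ne')

variable [Finite S]

theorem forward_eq_zero_of_links (h : CLC v)
    (hlinks : ∀ p q, x ≤ p → p ⋖ q → v p q = 0) (hxy : x < y) : v x y = 0 := by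
  refine le_induction_of_covBy (P := fun y => x < y → v x y = 0) (lt_irrefl x).elim ?_ hxy.le hxy
  intro p q hxp hpq ih _
  rcases hxp.eq_or_lt with rfl | hxp
  · exact hlinks x q le_rfl hpq
  · rw [h.forward_eq_max hxp hpq.lt, ih hxp, hlinks p q hxp.le hpq, max_self]

theorem forward_eq_zero_above_covBy (hv : IsLlull v) (h : CLC v) {q q' : S} (hq : q ⋖ q')
    (h0 : v q q' = 0) (hqx : q ≤ x) (hxy : x < y) : v x y = 0 := by
  have hlinks : ∀ p, q ≤ p → ∀ p', p ⋖ p' → v p p' = 0 := by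
    refine fun p hqp => le_induction_of_covBy (P := fun p => ∀ p', p ⋖ p' → v p p' = 0)
      (fun p' hp' => hq.unique_right hp' ▸ h0) ?_ hqp
    exact fun p r _ hpr ih r' hr' => h.forward_eq_zero_of_covBy_of_covBy hv hpr hr' (ih r hpr)
  exact h.forward_eq_zero_of_links (fun p p' hxp => hlinks p (hqx.trans hxp) p') hxy

theorem eq_zero_of_isMin_of_covBy (hv : IsLlull v) (h : CLC v) (hx : IsMin x) (hxy : x ⋖ y)
    (h0 : v x y = 0) {a b : S} (hab : a ≠ b) : v a b = 0 := by
  have hforward : ∀ a b, a < b → v a b = 0 := fun a _ hab =>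
    h.forward_eq_zero_above_covBy hv hxy h0 (le_of_not_gt hx.not_lt) hab
  rcases hab.lt_or_gt with hab | hba
  · exact hforward a b hab
  · exact le_antisymm (hforward b a hba ▸ h.backward_le_forward hba) (hv.nonneg hba.ne')

end CLC

section iScore

theorem chainMin_le_headD (x y : S) (l : List S) : chainMin v x l y ≤ v x (l.headD y) := by
  cases l with
  | nil => exact le_rfl
  | cons z l => exact min_le_left _ _

theorem le_iScore [Finite S] (x y : S) : v x y ≤ iScore v x y := by
  obtain ⟨M, hM⟩ := (Set.finite_range (v x)).bddAbove
  refine le_csSup ⟨M, ?_⟩ ⟨[], rfl⟩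
  rintro _ ⟨l, rfl⟩
  exact (chainMin_le_headD x y l).trans (hM ⟨_, rfl⟩)

theorem iScore_le {x y : S} {r : ℝ} (h : ∀ l, chainMin v x l y ≤ r) : iScore v x y ≤ r :=
  csSup_le ⟨_, [], rfl⟩ fun _ ⟨l, hl⟩ => hl ▸ h l

theorem chainMin_nonpos_of_cut {X : Set S} (hcut : ∀ a ∉ X, ∀ b ∈ X, v a b ≤ 0) {x : S}
    (hx : x ∈ X) (l : List S) {y : S} (hy : y ∉ X) : chainMin v y l x ≤ 0 := by
  induction l generalizing y with
  | nil => exact hcut y hy x hx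
  | cons z l ih =>
    by_cases hz : z ∈ X
    · exact (min_le_left _ _).trans (hcut y hy z hz)
    · exact (min_le_right _ _).trans (ih hz)

end iScore

section clcTop

variable [LinearOrder S] {x y : S}

theorem clcTop_backward_pos [Finite S] (hclc : CLC v) (hx : x ∈ clcTop v) {p : S}
    (hp : p < x) : 0 < v x p := by
  refine (ge_induction_of_covBy (P := fun p => p = x ∨ 0 < v x p) (.inl rfl) ?_
    hp.le).resolve_left hp.ne
  intro p q hpq hqx ih
  right
  rcases hqx.eq_or_lt with rfl | hqx
  · exact hx p q hpq.lt hpq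
  · rw [hclc.backward_eq_min hpq.lt hqx]
    exact lt_min (ih.resolve_left hqx.ne) (hx p q (hpq.lt.trans hqx) hpq)

theorem clcTop_backward_eq_zero (hv : IsLlull v) (hclc : CLC v) (hx : x ∈ clcTop v)
    (hy : y ∉ clcTop v) : v y x = 0 := by
  simp only [clcTop, Set.mem_ofPred_eq, not_forall, not_lt] at hy
  obtain ⟨p, p', hpy, hpp', hdead⟩ := hy
  have hxp : x ≤ p := le_of_not_gt fun hpx => (hx p p' hpx hpp').not_ge hdead
  have hxy : x < y := hxp.trans_lt hpy
  exact le_antisymm ((hclc.backward_le_of_le hxp hpp'.lt (hpp'.ge_of_gt hpy)).trans hdead)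
    (hv.nonneg hxy.ne')

theorem clcTop_forward_pos [Finite S] (hv : IsLlull v) (hclc : CLC v)
    (hnz : ∃ x y : S, x ≠ y ∧ 0 < v x y) (hx : x ∈ clcTop v) (hyx : y ≠ x) :
    0 < v x y := by
  rcases hyx.lt_or_gt with hyx | hxy
  · exact clcTop_backward_pos hclc hx hyx
  refine (hv.nonneg hxy.ne).lt_of_ne fun h0 => ?_
  obtain ⟨x', hxx', hx'y⟩ := exists_covBy_le_of_lt hxy
  have hdead : v x x' = 0 :=
    le_antisymm (h0 ▸ hclc.forward_le_of_le le_rfl hxx'.lt hx'y) (hv.nonneg hxx'.lt.ne)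
  by_cases hmin : IsMin x
  · obtain ⟨a, b, hab, hpos⟩ := hnz
    exact hpos.ne' (hclc.eq_zero_of_isMin_of_covBy hv hmin hxx' hdead hab)
  · obtain ⟨p, hpx⟩ := not_isMin_iff.1 hmin
    exact (clcTop_backward_pos hclc hx hpx).ne'
      (hclc.backward_eq_zero_of_lt_of_covBy hv hpx hxx' hdead)

theorem clcTop_iScore_pos [Finite S] (hv : IsLlull v) (hclc : CLC v)
    (hnz : ∃ x y : S, x ≠ y ∧ 0 < v x y) (hx : x ∈ clcTop v) (hyx : y ≠ x) :
    0 < iScore v x y :=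
  (clcTop_forward_pos hv hclc hnz hx hyx).trans_le (le_iScore x y)

theorem clcTop_iScore_eq_zero [Finite S] (hv : IsLlull v) (hclc : CLC v) (hx : x ∈ clcTop v)
    (hy : y ∉ clcTop v) : iScore v y x = 0 :=
  le_antisymm
    (iScore_le fun l => chainMin_nonpos_of_cut
      (fun _ ha _ hb => (clcTop_backward_eq_zero hv hclc hb ha).le) hx l hy)
    ((clcTop_backward_eq_zero hv hclc hx hy).symm.le.trans (le_iScore y x))

end clcTop

end

/-- For a non-vanishing Llull matrix with CLC structure, the set `X = clcTop v`
satisfies (i) `v y x = 0` for `x ∈ X`, `y ∉ X`; (ii) `v x y > 0` for `x ∈ X`,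
`y ≠ x`; in particular `X` is the top dominant irreducible component. -/
theorem stmt14 {S : Type*} [LinearOrder S] [Fintype S]
    (v : S → S → ℝ) (hv : IsLlull v) (hclc : CLC v)
    (hnz : ∃ x y : S, x ≠ y ∧ 0 < v x y) :
    (∀ x ∈ clcTop v, ∀ y ∉ clcTop v, v y x = 0) ∧
    (∀ x ∈ clcTop v, ∀ y : S, y ≠ x → 0 < v x y) ∧
    (∀ x ∈ clcTop v, ∀ y : S,
      (y ∈ clcTop v ↔ (y = x ∨ (0 < iScore v x y ∧ 0 < iScore v y x)))) ∧
    (∀ x ∈ clcTop v, ∀ y ∉ clcTop v, 0 < iScore v x y ∧ iScore v y x = 0) := by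
  refine ⟨fun x hx y hy => clcTop_backward_eq_zero hv hclc hx hy,
    fun x hx y hyx => clcTop_forward_pos hv hclc hnz hx hyx, fun x hx y => ⟨fun hy => ?_, ?_⟩,
    fun x hx y hy => ⟨clcTop_iScore_pos hv hclc hnz hx (ne_of_mem_of_not_mem hx hy).symm,
      clcTop_iScore_eq_zero hv hclc hx hy⟩⟩
  · exact or_iff_not_imp_left.2 fun hyx =>
      ⟨clcTop_iScore_pos hv hclc hnz hx hyx, clcTop_iScore_pos hv hclc hnz hy (Ne.symm hyx)⟩
  · rintro (rfl | ⟨-, hyx⟩)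
    · exact hx
    · by_contra hy
      exact hyx.ne' (clcTop_iScore_eq_zero hv hclc hx hy)
end

section
/- Let v be a Llull matrix with CLC structure on (S, ξ), and ρ_x = (1/(N−1)) Σ_{y≠x} v_{xy} the mean preference scores. Then x <_ξ y implies ρ_x ≥ ρ_y, and ρ_x = ρ_y holds if and only if v_{xy} = v_{yx}. -/
/-- Mean preference score `ρ x = (1/(N−1)) Σ_{y≠x} v x y`. -/
noncomputable def mps {S : Type*} [Fintype S] [DecidableEq S]
    (v : S → S → ℝ) (x : S) : ℝ :=
  ((Fintype.card S : ℝ) - 1)⁻¹ * ∑ y ∈ Finset.univ.erase x, v x y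

/-!
Along a covering pair `a ⋖ b` the CLC conditions (2)–(3) give `v b z ≤ v a z` for every
third alternative `z`, so the row sum of `a` dominates that of `b` termwise, the
only other difference being the margin `v a b - v b a ≥ 0`. Hence `ρ` decreases along every
covering step, and `ρ a = ρ b` forces a tie `v a b = v b a`; conversely, a tie makes condition (4)
collapse to `t a z = t b z`, which together with (2)–(3) makes the rows of `a` and `b` agree.
An arbitrary pair `x < y` is then handled by walking along a chain of covering steps: a tie
between `x` and `y` is equivalent to ties at every step, by the max/min conditions.
-/

open Finset Relation

theorem CovBy.lt_or_lt_of_ne {S : Type*} [LinearOrder S] {a b z : S} (hab : a ⋖ b)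
    (hza : z ≠ a) (hzb : z ≠ b) : z < a ∨ b < z := by
  refine hza.lt_or_gt.imp_right fun haz => lt_of_le_of_ne ?_ hzb.symm
  exact not_lt.1 fun hzb' => haz.not_ge (hab.le_of_lt hzb')

namespace CLC

variable {S : Type*} [LinearOrder S] {v : S → S → ℝ}

theorem rev_le (hclc : CLC v) {x y : S} (hxy : x < y) : v y x ≤ v x y :=
  hclc.1 x y hxy

theorem eq_max (hclc : CLC v) {x y z : S} (hxy : x < y) (hyz : y < z) :
    v x z = max (v x y) (v y z) :=
  hclc.2.1 x y z hxy hyz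

theorem eq_min (hclc : CLC v) {x y z : S} (hxy : x < y) (hyz : y < z) :
    v z x = min (v z y) (v y x) :=
  hclc.2.2.1 x y z hxy hyz

theorem le_of_covBy (hclc : CLC v) {a b z : S} (hab : a ⋖ b) (hza : z ≠ a) (hzb : z ≠ b) :
    v b z ≤ v a z := by
  rcases hab.lt_or_lt_of_ne hza hzb with hz | hz
  · rw [hclc.eq_min hz hab.lt]
    exact min_le_right _ _
  · rw [hclc.eq_max hab.lt hz]
    exact le_max_right _ _

theorem eq_of_covBy_of_tie (hclc : CLC v) {a b z : S} (hab : a ⋖ b) (htie : v a b = v b a)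
    (hza : z ≠ a) (hzb : z ≠ b) : v a z = v b z ∧ v z a = v z b := by
  obtain ⟨hlo, hhi⟩ := hclc.2.2.2 a b z hab hza hzb
  have hrow : v a z = v b z := by
    rcases hab.lt_or_lt_of_ne hza hzb with hz | hz
    · have hmin := hclc.eq_min hz hab.lt
      have hmax := hclc.eq_max hz hab.lt
      have := hclc.rev_le hz
      rcases min_cases (v b a) (v a z) with h | h <;>
        rcases max_cases (v z a) (v a b) with h' | h' <;> linarith
    · have hmax := hclc.eq_max hab.lt hz
      have hmin := hclc.eq_min hab.lt hz
      have := hclc.rev_le hz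
      rcases max_cases (v a b) (v b z) with h | h <;>
        rcases min_cases (v z b) (v b a) with h' | h' <;> linarith
  exact ⟨hrow, by linarith⟩

theorem tie_of_lt_of_lt (hclc : CLC v) {x y z : S} (hxz : x < z) (hzy : z < y)
    (htie : v x y = v y x) : v x z = v z x := by
  have hmax := hclc.eq_max hxz hzy
  have hmin := hclc.eq_min hxz hzy
  have := hclc.rev_le hxz
  have := le_max_left (v x z) (v z y)
  have := min_le_right (v y z) (v z x)
  linarith

theorem tie_iff_of_covBy_of_lt (hclc : CLC v) {x y z : S} (hxz : x ⋖ z) (hzy : z < y) :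
    v x y = v y x ↔ v x z = v z x ∧ v z y = v y z := by
  have hxy := hxz.lt.trans hzy
  constructor
  · intro htie
    have htie' := hclc.tie_of_lt_of_lt hxz.lt hzy htie
    obtain ⟨hrow, hcol⟩ := hclc.eq_of_covBy_of_tie hxz htie' hxy.ne' hzy.ne'
    exact ⟨htie', hrow ▸ hcol ▸ htie⟩
  · rintro ⟨htie', hzy'⟩
    obtain ⟨hrow, hcol⟩ := hclc.eq_of_covBy_of_tie hxz htie' hxy.ne' hzy.ne'
    rw [hrow, hcol, hzy']

end CLC

section MeanPreferenceScore

variable {S : Type*} [Fintype S] [DecidableEq S]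

omit [DecidableEq S] in
theorem inv_card_sub_one_pos {a b : S} (hab : a ≠ b) :
    0 < ((Fintype.card S : ℝ) - 1)⁻¹ := by
  have : (1 : ℝ) < Fintype.card S := by exact_mod_cast Fintype.one_lt_card_iff.2 ⟨a, b, hab⟩
  exact inv_pos.2 (sub_pos.2 this)

theorem sum_erase_eq_add_sum_erase_erase {a b : S} (hab : a ≠ b) (f : S → ℝ) :
    ∑ z ∈ univ.erase a, f z = f b + ∑ z ∈ (univ.erase a).erase b, f z :=
  (add_sum_erase _ f (mem_erase.2 ⟨hab.symm, mem_univ b⟩)).symm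

theorem mps_sub_mps (v : S → S → ℝ) {a b : S} (hab : a ≠ b) :
    mps v a - mps v b = ((Fintype.card S : ℝ) - 1)⁻¹ *
      ((v a b - v b a) + ∑ z ∈ (univ.erase a).erase b, (v a z - v b z)) := by
  rw [mps, mps, ← mul_sub, sum_erase_eq_add_sum_erase_erase hab,
    sum_erase_eq_add_sum_erase_erase hab.symm, erase_right_comm, sum_sub_distrib]
  ring

variable [LinearOrder S] {v : S → S → ℝ}

theorem CLC.margin_add_sum_nonneg_of_covBy (hclc : CLC v) {a b : S} (hab : a ⋖ b) :
    0 ≤ v a b - v b a ∧ 0 ≤ ∑ z ∈ (univ.erase a).erase b, (v a z - v b z) := by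
  refine ⟨sub_nonneg.2 (hclc.rev_le hab.lt), sum_nonneg fun z hz => ?_⟩
  obtain ⟨hzb, hza, -⟩ := mem_erase.1 hz |>.imp_right mem_erase.1
  exact sub_nonneg.2 (hclc.le_of_covBy hab hza hzb)

theorem CLC.mps_le_of_covBy (hclc : CLC v) {a b : S} (hab : a ⋖ b) : mps v b ≤ mps v a := by
  obtain ⟨hmargin, hsum⟩ := hclc.margin_add_sum_nonneg_of_covBy hab
  have := mps_sub_mps v hab.lt.ne
  have := mul_nonneg (inv_card_sub_one_pos hab.lt.ne).le (add_nonneg hmargin hsum)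
  linarith

theorem CLC.mps_eq_iff_of_covBy (hclc : CLC v) {a b : S} (hab : a ⋖ b) :
    mps v a = mps v b ↔ v a b = v b a := by
  obtain ⟨hmargin, hsum⟩ := hclc.margin_add_sum_nonneg_of_covBy hab
  rw [← sub_eq_zero, mps_sub_mps v hab.lt.ne,
    mul_eq_zero_iff_left (inv_card_sub_one_pos hab.lt.ne).ne']
  constructor
  · intro h
    linarith
  · intro htie
    rw [htie, sub_self, zero_add]
    refine sum_eq_zero fun z hz => ?_
    obtain ⟨hzb, hza, -⟩ := mem_erase.1 hz |>.imp_right mem_erase.1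
    exact sub_eq_zero.2 (hclc.eq_of_covBy_of_tie hab htie hza hzb).1

theorem CLC.mps_antitone (hclc : CLC v) : Antitone (mps v) := by
  let _ := Fintype.toLocallyFiniteOrder (α := S)
  exact (antitone_iff_forall_covBy _).2 fun _ _ hab => hclc.mps_le_of_covBy hab

theorem CLC.mps_eq_iff_of_lt (hclc : CLC v) {x y : S} (hxy : x < y) :
    mps v x = mps v y ↔ v x y = v y x := by
  let _ := Fintype.toLocallyFiniteOrder (α := S)
  induction transGen_covBy_of_lt hxy using TransGen.head_induction_on with
  | single hab => exact hclc.mps_eq_iff_of_covBy hab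
  | @head x z hxz hzy ih =>
    replace hzy := lt_iff_transGen_covBy.2 hzy
    replace ih : mps v z = mps v y ↔ v z y = v y z := ih hzy
    have hsqueeze : mps v x = mps v y ↔ mps v x = mps v z ∧ mps v z = mps v y := by
      have := hclc.mps_antitone hxz.le
      have := hclc.mps_antitone hzy.le
      constructor
      · intro h
        constructor <;> linarith
      · rintro ⟨h, h'⟩
        exact h.trans h'
    rw [hsqueeze, hclc.mps_eq_iff_of_covBy hxz, ih, hclc.tie_iff_of_covBy_of_lt hxz hzy]

end MeanPreferenceScore

theorem stmt15_general {S : Type*} [LinearOrder S] [Fintype S] [DecidableEq S]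
    (v : S → S → ℝ) (hclc : CLC v) :
    (∀ x y : S, x < y → mps v y ≤ mps v x) ∧
    (∀ x y : S, mps v x = mps v y ↔ v x y = v y x) := by
  refine ⟨fun x y hxy => hclc.mps_antitone hxy.le, fun x y => ?_⟩
  rcases lt_trichotomy x y with hxy | rfl | hyx
  · exact hclc.mps_eq_iff_of_lt hxy
  · exact iff_of_true rfl rfl
  · rw [eq_comm, eq_comm (a := v x y)]
    exact hclc.mps_eq_iff_of_lt hyx

/-- For a Llull matrix with CLC structure: `x < y` implies `ρ x ≥ ρ y`, and
`ρ x = ρ y` iff `v x y = v y x`. -/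
theorem stmt15 {S : Type*} [LinearOrder S] [Fintype S] [DecidableEq S]
    (hS : 2 ≤ Fintype.card S)
    (v : S → S → ℝ) (hv : IsLlull v) (hclc : CLC v) :
    (∀ x y : S, x < y → mps v y ≤ mps v x) ∧
    (∀ x y : S, mps v x = mps v y ↔ v x y = v y x) :=
  stmt15_general v hclc
end

section
/- Let v be a Llull matrix with CLC structure and positive turnouts t_{xy} = v_{xy} + v_{yx} > 0 for all x ≠ y. Then the relative scores q_{xy} = v_{xy}/t_{xy} satisfy: q_{xy} ≥ q_{yx} whenever x <_ξ y, and q_{xz} ≥ q_{yz}, q_{zx} ≤ q_{zy} whenever x <_ξ y and z ∉ {x,y}, where ξ is any admissible order. -/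
/-
Relative scores compare as cross products of the underlying scores:
`a / (a + b) ≤ c / (c + d)` iff `a * d ≤ c * b`. For `x < y` and a third candidate `z`, the
CLC identities give `v y z ≤ v x z` and `v z x ≤ v z y` when `z` lies outside the interval
`(x, y)`, while for `x < z < y` the diagonal inequality `v y x ≤ v x y` gives `v z x ≤ v x z`
and `v y z ≤ v z y`. In both cases the nonnegative scores satisfy
`v y z * v z x ≤ v x z * v z y`, which is both claimed inequalities between relative scores.
-/

theorem div_add_le_div_add_iff {K : Type*} [Field K] [LinearOrder K] [IsStrictOrderedRing K]
    {a b c d : K} (hab : 0 < a + b) (hcd : 0 < c + d) :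
    a / (a + b) ≤ c / (c + d) ↔ a * d ≤ c * b := by
  rw [div_le_div_iff₀ hab hcd, mul_add, mul_add, mul_comm c a, add_le_add_iff_left]

namespace CLC

variable {S : Type*} [LinearOrder S] {v : S → S → ℝ}

theorem le_of_lt_of_lt (h : CLC v) {x y z : S} (hxy : x < y) (hyz : y < z) :
    v y z ≤ v x z ∧ v z x ≤ v z y := by
  rw [h.2.1 x y z hxy hyz, h.2.2.1 x y z hxy hyz]
  exact ⟨le_max_right _ _, min_le_left _ _⟩

theorem le_of_lt_of_lt' (h : CLC v) {x y z : S} (hzx : z < x) (hxy : x < y) :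
    v y z ≤ v x z ∧ v z x ≤ v z y := by
  rw [h.2.1 z x y hzx hxy, h.2.2.1 z x y hzx hxy]
  exact ⟨min_le_right _ _, le_max_left _ _⟩

theorem mul_le_mul_of_lt (h : CLC v) (hv : ∀ x y : S, x ≠ y → 0 ≤ v x y) {x y z : S}
    (hxy : x < y) (hzx : z ≠ x) (hzy : z ≠ y) :
    v y z * v z x ≤ v x z * v z y := by
  rcases hzx.lt_or_gt with hz_lt_x | hx_lt_z
  · obtain ⟨hyz, hzx'⟩ := h.le_of_lt_of_lt' hz_lt_x hxy
    exact mul_le_mul hyz hzx' (hv z x hzx) (hv x z hzx.symm)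
  rcases hzy.lt_or_gt with hz_lt_y | hy_lt_z
  · calc v y z * v z x ≤ v z y * v x z :=
          mul_le_mul (h.1 z y hz_lt_y) (h.1 x z hx_lt_z) (hv z x hzx) (hv z y hzy)
      _ = v x z * v z y := mul_comm _ _
  · obtain ⟨hyz, hzx'⟩ := h.le_of_lt_of_lt hxy hy_lt_z
    exact mul_le_mul hyz hzx' (hv z x hzx) (hv x z hzx.symm)

end CLC

theorem stmt16_general {S : Type*} [LinearOrder S]
    (v : S → S → ℝ) (hv : IsLlull v) (hclc : CLC v)
    (ht : ∀ x y : S, x ≠ y → 0 < v x y + v y x) :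
    (∀ x y : S, x < y →
      v y x / (v y x + v x y) ≤ v x y / (v x y + v y x)) ∧
    (∀ x y z : S, x < y → z ≠ x → z ≠ y →
      v y z / (v y z + v z y) ≤ v x z / (v x z + v z x) ∧
      v z x / (v z x + v x z) ≤ v z y / (v z y + v y z)) := by
  have hv₀ : ∀ x y : S, x ≠ y → 0 ≤ v x y := fun x y hxy => (hv x y hxy).1
  refine ⟨fun x y hxy => ?_, fun x y z hxy hzx hzy => ?_⟩
  · rw [add_comm (v y x)]
    exact div_le_div_of_nonneg_right (hclc.1 x y hxy) (ht x y hxy.ne).le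
  · have hcross := hclc.mul_le_mul_of_lt hv₀ hxy hzx hzy
    constructor
    · rwa [div_add_le_div_add_iff (ht y z hzy.symm) (ht x z hzx.symm)]
    · rwa [div_add_le_div_add_iff (ht z x hzx) (ht z y hzy), mul_comm (v z x), mul_comm (v z y)]

/-- With CLC structure and positive turnouts, the relative scores
`q x y = v x y / (v x y + v y x)` satisfy the corresponding inequalities. -/
theorem stmt16 {S : Type*} [LinearOrder S] [Fintype S]
    (v : S → S → ℝ) (hv : IsLlull v) (hclc : CLC v)
    (ht : ∀ x y : S, x ≠ y → 0 < v x y + v y x) :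
    (∀ x y : S, x < y →
      v y x / (v y x + v x y) ≤ v x y / (v x y + v y x)) ∧
    (∀ x y z : S, x < y → z ≠ x → z ≠ y →
      v y z / (v y z + v z y) ≤ v x z / (v x z + v z x) ∧
      v z x / (v z x + v x z) ≤ v z y / (v z y + v y z)) :=
  stmt16_general v hv hclc ht
end

section
/- Let v be a Llull matrix with CLC structure and positive turnouts. Define ρ_x = (1/(N−1)) Σ_{y≠x} v_{xy} and σ_x = (1/(N−1)) Σ_{y≠x} v_{xy}/t_{xy}. Then for all x, y: σ_x > σ_y if and only if ρ_x > ρ_y. -/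
/-- Mean relative preference score `σ x = (1/(N−1)) Σ_{y≠x} v x y / t x y`. -/
noncomputable def mrps {S : Type*} [Fintype S] [DecidableEq S]
    (v : S → S → ℝ) (x : S) : ℝ :=
  ((Fintype.card S : ℝ) - 1)⁻¹ * ∑ y ∈ Finset.univ.erase x, v x y / (v x y + v y x)

/-!
Both mean scores are antitone along the order, and since the order is locally finite it suffices
to compare each `x` with its immediate successor `x'`. Then `ρ x - ρ x'` and `σ x - σ x'` are, up
to the factor `1/(N-1)`, sums of nonnegative terms: the drops `v x z - v x' z` (resp. of
`v · z / t · z`) against the common opponents `z`, plus the head-to-head margin `m x x'`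
(resp. `m x x' / t x x'`). A drop in `v · z` forces a drop in `v · z / t · z` unless `v z x' = 0`,
in which case the upper bound of condition (4) makes `m x x'` positive; conversely the lower bound
`t x' z ≤ t x z` of (4) shows that `v · z / t · z` can only drop if `v · z` does.
-/

open Finset

lemma lt_iff_lt_or_lt_of_le_of_le {β : Type*} [LinearOrder β] {a b c : β}
    (hab : a ≤ b) (hbc : b ≤ c) : a < c ↔ a < b ∨ b < c := by
  constructor
  · intro hac
    rcases hab.lt_or_eq with h | rfl
    · exact .inl h
    · exact .inr hac
  · rintro (h | h)
    · exact h.trans_le hbc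
    · exact hab.trans_lt h

theorem Antitone.lt_iff_lt_of_covBy {α β γ : Type*} [LinearOrder α] [LocallyFiniteOrder α]
    [LinearOrder β] [LinearOrder γ] {f : α → β} {g : α → γ} (hf : Antitone f) (hg : Antitone g)
    (h : ∀ a b, a ⋖ b → (f b < f a ↔ g b < g a)) (a b : α) : f b < f a ↔ g b < g a := by
  rcases le_total a b with hab | hba
  · induction le_iff_reflTransGen_covBy.mp hab with
    | refl => simp
    | tail hac hcb ih =>
      have hac := le_iff_reflTransGen_covBy.mpr hac
      rw [lt_iff_lt_or_lt_of_le_of_le (hf hcb.le) (hf hac),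
        lt_iff_lt_or_lt_of_le_of_le (hg hcb.le) (hg hac), h _ _ hcb, ih hac]
  · exact iff_of_false (hf hba).not_gt (hg hba).not_gt

lemma ne_and_ne_of_mem_erase_erase {α : Type*} [DecidableEq α] {s : Finset α} {x x' z : α}
    (hz : z ∈ (s.erase x).erase x') : z ≠ x ∧ z ≠ x' :=
  ⟨ne_of_mem_erase (mem_of_mem_erase hz), ne_of_mem_erase hz⟩

lemma pos_sum_add_iff {ι : Type*} {s : Finset ι} {f : ι → ℝ} {a : ℝ} (hf : ∀ i ∈ s, 0 ≤ f i)
    (ha : 0 ≤ a) : 0 < ∑ i ∈ s, f i + a ↔ (∃ i ∈ s, 0 < f i) ∨ 0 < a := by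
  rw [← sum_pos_iff_of_nonneg hf]
  have := sum_nonneg hf
  constructor
  · intro h
    by_contra! h'
    linarith [h'.1, h'.2]
  · rintro (h | h) <;> linarith

lemma div_add_le_div_add {a b a' b' : ℝ} (ha' : 0 ≤ a') (hb : 0 ≤ b) (hab : 0 < a + b)
    (hab' : 0 < a' + b') (haa' : a' ≤ a) (hbb' : b ≤ b') : a' / (a' + b') ≤ a / (a + b) := by
  rw [div_le_div_iff₀ hab' hab]
  nlinarith [mul_le_mul_of_nonneg_left hbb' ha', mul_le_mul_of_nonneg_right haa' (hb.trans hbb')]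

lemma div_add_lt_div_add {a b a' b' : ℝ} (ha' : 0 ≤ a') (hb' : 0 < b') (hab : 0 < a + b)
    (hab' : 0 < a' + b') (haa' : a' < a) (hbb' : b ≤ b') : a' / (a' + b') < a / (a + b) := by
  rw [div_lt_div_iff₀ hab' hab]
  nlinarith [mul_le_mul_of_nonneg_left hbb' ha', mul_lt_mul_of_pos_right haa' hb']

section Scores

variable {S : Type*}

noncomputable def relScore (v : S → S → ℝ) (x y : S) : ℝ :=
  v x y / (v x y + v y x)

/-- `mps v` is `rowMean v` and `mrps v` is `rowMean (relScore v)`, definitionally. -/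
noncomputable def rowMean [Fintype S] [DecidableEq S] (F : S → S → ℝ) (x : S) : ℝ :=
  ((Fintype.card S : ℝ) - 1)⁻¹ * ∑ y ∈ univ.erase x, F x y

lemma rowMean_sub_rowMean [Fintype S] [DecidableEq S] (F : S → S → ℝ) {x x' : S}
    (hne : x ≠ x') :
    rowMean F x - rowMean F x' = ((Fintype.card S : ℝ) - 1)⁻¹ *
      (∑ z ∈ (univ.erase x).erase x', (F x z - F x' z) + (F x x' - F x' x)) := by
  have hx' : x' ∈ univ.erase x := mem_erase.mpr ⟨hne.symm, mem_univ _⟩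
  have hx : x ∈ univ.erase x' := mem_erase.mpr ⟨hne, mem_univ _⟩
  rw [rowMean, rowMean, ← sum_erase_add _ _ hx', ← sum_erase_add _ _ hx, erase_right_comm,
    sum_sub_distrib]
  ring

lemma rowMean_lt_rowMean_iff [Fintype S] [DecidableEq S] (F : S → S → ℝ) {x x' : S}
    (hne : x ≠ x') : rowMean F x' < rowMean F x ↔
      0 < ∑ z ∈ (univ.erase x).erase x', (F x z - F x' z) + (F x x' - F x' x) := by
  have hN : (1 : ℝ) < Fintype.card S := by
    exact_mod_cast Fintype.one_lt_card_iff.mpr ⟨x, x', hne⟩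
  rw [← sub_pos, rowMean_sub_rowMean F hne, mul_pos_iff_of_pos_left (inv_pos.mpr (by linarith))]

lemma rowMean_le_rowMean [Fintype S] [DecidableEq S] (F : S → S → ℝ) {x x' : S}
    (hne : x ≠ x') (hF : ∀ z, z ≠ x → z ≠ x' → F x' z ≤ F x z) (hx : F x' x ≤ F x x') :
    rowMean F x' ≤ rowMean F x := by
  have hN : (1 : ℝ) ≤ Fintype.card S := by
    exact_mod_cast Fintype.one_lt_card_iff.mpr ⟨x, x', hne⟩ |>.le
  rw [← sub_nonneg, rowMean_sub_rowMean F hne]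
  refine mul_nonneg (inv_nonneg.mpr (by linarith)) (add_nonneg ?_ (sub_nonneg.mpr hx))
  refine sum_nonneg fun z hz => sub_nonneg.mpr ?_
  exact hF z (ne_and_ne_of_mem_erase_erase hz).1 (ne_and_ne_of_mem_erase_erase hz).2

variable [LinearOrder S] {v : S → S → ℝ} {x x' z : S}

lemma CLC.le_of_covBy_s17 (hclc : CLC v) (hxx' : x ⋖ x') (hzx : z ≠ x) (hzx' : z ≠ x') :
    v x' z ≤ v x z ∧ v z x ≤ v z x' := by
  obtain ⟨-, hmax, hmin, -⟩ := hclc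
  rcases hzx.lt_or_gt with hz | hz
  · rw [hmin z x x' hz hxx'.lt, hmax z x x' hz hxx'.lt]
    exact ⟨min_le_right _ _, le_max_left _ _⟩
  · have hz' : x' < z := (hxx'.ge_of_gt hz).lt_of_ne hzx'.symm
    rw [hmax x x' z hxx'.lt hz', hmin x x' z hxx'.lt hz']
    exact ⟨le_max_right _ _, min_le_left _ _⟩

lemma CLC.relScore_le_of_covBy (hv : IsLlull v) (hclc : CLC v)
    (ht : ∀ x y : S, x ≠ y → 0 < v x y + v y x) (hxx' : x ⋖ x') (hzx : z ≠ x) (hzx' : z ≠ x') :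
    relScore v x' z ≤ relScore v x z :=
  div_add_le_div_add (hv x' z hzx'.symm).1 (hv z x hzx).1 (ht x z hzx.symm) (ht x' z hzx'.symm)
    (hclc.le_of_covBy_s17 hxx' hzx hzx').1 (hclc.le_of_covBy_s17 hxx' hzx hzx').2

lemma CLC.relScore_lt_or_lt_of_covBy (hv : IsLlull v) (hclc : CLC v)
    (ht : ∀ x y : S, x ≠ y → 0 < v x y + v y x) (hxx' : x ⋖ x') (hzx : z ≠ x) (hzx' : z ≠ x')
    (hlt : v x' z < v x z) : relScore v x' z < relScore v x z ∨ v x' x < v x x' := by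
  obtain ⟨-, hcol⟩ := hclc.le_of_covBy_s17 hxx' hzx hzx'
  have hzx0 := (hv z x hzx).1
  rcases (hzx0.trans hcol).lt_or_eq with hpos | hzero
  · exact .inl <| div_add_lt_div_add (hv x' z hzx'.symm).1 hpos (ht x z hzx.symm)
      (ht x' z hzx'.symm) hlt hcol
  · have hmargin := (hclc.2.2.2 x x' z hxx' hzx hzx').2
    exact .inr (by linarith)

lemma CLC.lt_of_relScore_lt_of_covBy (hclc : CLC v) (hxx' : x ⋖ x') (hzx : z ≠ x)
    (hzx' : z ≠ x') (hlt : relScore v x' z < relScore v x z) : v x' z < v x z := by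
  obtain ⟨hrow, hcol⟩ := hclc.le_of_covBy_s17 hxx' hzx hzx'
  refine hrow.lt_of_ne fun hrow_eq => hlt.ne ?_
  have hturnout := (hclc.2.2.2 x x' z hxx' hzx hzx').1
  have hcol_eq : v z x' = v z x := by linarith
  rw [relScore, relScore, hrow_eq, hcol_eq]

lemma CLC.antitone_mps [Fintype S] [DecidableEq S] [LocallyFiniteOrder S] (hclc : CLC v) :
    Antitone (mps v) :=
  (antitone_iff_forall_covBy _).mpr fun _ _ hxx' => rowMean_le_rowMean v hxx'.ne
    (fun _ hzx hzx' => (hclc.le_of_covBy_s17 hxx' hzx hzx').1) (hclc.1 _ _ hxx'.lt)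

lemma CLC.antitone_mrps [Fintype S] [DecidableEq S] [LocallyFiniteOrder S] (hv : IsLlull v)
    (hclc : CLC v) (ht : ∀ x y : S, x ≠ y → 0 < v x y + v y x) : Antitone (mrps v) := by
  refine (antitone_iff_forall_covBy _).mpr fun x x' hxx' => rowMean_le_rowMean (relScore v)
    hxx'.ne (fun _ hzx hzx' => hclc.relScore_le_of_covBy hv ht hxx' hzx hzx') ?_
  rw [relScore, relScore, add_comm (v x' x)]
  exact div_le_div_of_nonneg_right (hclc.1 x x' hxx'.lt) (ht x x' hxx'.ne).le

lemma CLC.mrps_lt_iff_mps_lt_of_covBy [Fintype S] [DecidableEq S] (hv : IsLlull v)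
    (hclc : CLC v) (ht : ∀ x y : S, x ≠ y → 0 < v x y + v y x) (hxx' : x ⋖ x') :
    mrps v x' < mrps v x ↔ mps v x' < mps v x := by
  have hne := hxx'.ne
  have hmargin : relScore v x x' - relScore v x' x = (v x x' - v x' x) / (v x x' + v x' x) := by
    rw [relScore, relScore, add_comm (v x' x), sub_div]
  have hm := sub_nonneg.mpr (hclc.1 x x' hxx'.lt)
  have hrel_nonneg : ∀ z ∈ (univ.erase x).erase x', 0 ≤ relScore v x z - relScore v x' z := by
    intro z hz
    obtain ⟨hzx, hzx'⟩ := ne_and_ne_of_mem_erase_erase hz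
    exact sub_nonneg.mpr (hclc.relScore_le_of_covBy hv ht hxx' hzx hzx')
  have hv_nonneg : ∀ z ∈ (univ.erase x).erase x', 0 ≤ v x z - v x' z := by
    intro z hz
    obtain ⟨hzx, hzx'⟩ := ne_and_ne_of_mem_erase_erase hz
    exact sub_nonneg.mpr (hclc.le_of_covBy_s17 hxx' hzx hzx').1
  change rowMean (relScore v) x' < rowMean (relScore v) x ↔ rowMean v x' < rowMean v x
  rw [rowMean_lt_rowMean_iff _ hne, rowMean_lt_rowMean_iff _ hne, hmargin,
    pos_sum_add_iff hrel_nonneg (div_nonneg hm (ht x x' hne).le), pos_sum_add_iff hv_nonneg hm,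
    div_pos_iff_of_pos_right (ht x x' hne), sub_pos]
  constructor
  · rintro (⟨z, hz, hrel⟩ | hpos)
    · obtain ⟨hzx, hzx'⟩ := ne_and_ne_of_mem_erase_erase hz
      exact .inl ⟨z, hz, sub_pos.mpr <|
        hclc.lt_of_relScore_lt_of_covBy hxx' hzx hzx' (sub_pos.mp hrel)⟩
    · exact .inr hpos
  · rintro (⟨z, hz, hdrop⟩ | hpos)
    · obtain ⟨hzx, hzx'⟩ := ne_and_ne_of_mem_erase_erase hz
      exact (hclc.relScore_lt_or_lt_of_covBy hv ht hxx' hzx hzx' (sub_pos.mp hdrop)).imp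
        (fun hrel => ⟨z, hz, sub_pos.mpr hrel⟩) id
    · exact .inr hpos

end Scores

theorem stmt17_general {S : Type*} [LinearOrder S] [Fintype S] [DecidableEq S]
    (v : S → S → ℝ) (hv : IsLlull v) (hclc : CLC v)
    (ht : ∀ x y : S, x ≠ y → 0 < v x y + v y x) :
    ∀ x y : S, mrps v y < mrps v x ↔ mps v y < mps v x := by
  let : LocallyFiniteOrder S := Fintype.toLocallyFiniteOrder
  exact (hclc.antitone_mrps hv ht).lt_iff_lt_of_covBy hclc.antitone_mps
    fun _ _ hxx' => hclc.mrps_lt_iff_mps_lt_of_covBy hv ht hxx'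

/-- With CLC structure and positive turnouts, `σ x > σ y` iff `ρ x > ρ y`. -/
theorem stmt17 {S : Type*} [LinearOrder S] [Fintype S] [DecidableEq S]
    (hS : 2 ≤ Fintype.card S)
    (v : S → S → ℝ) (hv : IsLlull v) (hclc : CLC v)
    (ht : ∀ x y : S, x ≠ y → 0 < v x y + v y x) :
    ∀ x y : S, mrps v y < mrps v x ↔ mps v y < mps v x :=
  stmt17_general v hv hclc ht
end

section
/- Let v be a Llull matrix with CLC structure on (S, ξ) such that t_{xy} = 0 for some pair x ≠ y. Then there exists a subset Y ⊆ S such that t_{xx̄} > 0 for all distinct x, x̄ ∉ Y, and v_{yx} = 0 for all y ∈ Y and x ≠ y. -/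
/-!
Write `t x y = v x y + v y x` for the turnout. Along a covering step `x ⋖ x'` the CLC condition
makes `t · z` decrease, so a vanishing turnout `t a b = 0` with `a < b` propagates to `t a c = 0`
for every `c > a` (for `a < c < b` use `v a c ≤ v a b` instead). At the predecessor `p ⋖ a` the
bound `t p b - t a b ≤ v p a - v a p`, together with `t p b ≥ v p b ≥ v p a`, gives `v a p = 0`,
and the max/min rules spread these zeros over the whole rows of `a` and `b`. So `Y` can be
taken to be the set of elements lying in some pair of zero turnout.
-/

section

variable {S : Type*} {v : S → S → ℝ}

namespace IsLlull

lemma nonneg_s18 (hv : IsLlull v) {x y : S} (h : x ≠ y) : 0 ≤ v x y := (hv x y h).1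

lemma turnout_nonneg (hv : IsLlull v) {x y : S} (h : x ≠ y) : 0 ≤ v x y + v y x :=
  add_nonneg (hv.nonneg_s18 h) (hv.nonneg_s18 h.symm)

lemma turnout_eq_zero_iff (hv : IsLlull v) {x y : S} (h : x ≠ y) :
    v x y + v y x = 0 ↔ v x y = 0 ∧ v y x = 0 :=
  add_eq_zero_iff_of_nonneg (hv.nonneg_s18 h) (hv.nonneg_s18 h.symm)

end IsLlull

namespace CLC

variable [LinearOrder S] {a b x y z : S}

lemma le_of_lt (hclc : CLC v) (hxy : x < y) : v y x ≤ v x y := hclc.1 x y hxy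

lemma up_left_le (hclc : CLC v) (hxy : x < y) (hyz : y < z) : v x y ≤ v x z :=
  (hclc.2.1 x y z hxy hyz).symm ▸ le_max_left _ _

lemma up_right_le (hclc : CLC v) (hxy : x < y) (hyz : y < z) : v y z ≤ v x z :=
  (hclc.2.1 x y z hxy hyz).symm ▸ le_max_right _ _

lemma down_le_left (hclc : CLC v) (hxy : x < y) (hyz : y < z) : v z x ≤ v z y :=
  (hclc.2.2.1 x y z hxy hyz).symm ▸ min_le_left _ _

lemma turnout_le_of_covBy (hclc : CLC v) (hxy : x ⋖ y) (hzx : z ≠ x) (hzy : z ≠ y) :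
    v y z + v z y ≤ v x z + v z x := by
  linarith [(hclc.2.2.2 x y z hxy hzx hzy).1]

lemma turnout_sub_le_of_covBy (hclc : CLC v) (hxy : x ⋖ y) (hzx : z ≠ x) (hzy : z ≠ y) :
    (v x z + v z x) - (v y z + v z y) ≤ v x y - v y x :=
  (hclc.2.2.2 x y z hxy hzx hzy).2

variable [Finite S]

lemma turnout_le_of_le (hclc : CLC v) (hzx : z < x) (hxy : x ≤ y) :
    v y z + v z y ≤ v x z + v z x := by
  induction y using WellFoundedLT.induction with
  | _ y ih =>
    rcases hxy.eq_or_lt with rfl | hxy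
    · exact le_rfl
    obtain ⟨p, hxp, hpy⟩ := exists_le_covBy_of_lt hxy
    exact (hclc.turnout_le_of_covBy hpy (hzx.trans_le hxp).ne (hzx.trans hxy).ne).trans
      (ih p hpy.lt hxp)

lemma turnout_eq_zero_of_lt (hclc : CLC v) (hv : IsLlull v) (hab : a < b)
    (ht : v a b + v b a = 0) (hax : a < x) : v a x + v x a = 0 := by
  refine le_antisymm ?_ (hv.turnout_nonneg hax.ne)
  rcases lt_or_ge x b with hxb | hbx
  · linarith [hclc.up_left_le hax hxb, hclc.le_of_lt hax, hv.nonneg_s18 hab.ne', hv.nonneg_s18 hab.ne]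
  · linarith [hclc.turnout_le_of_le hab hbx]

lemma apply_left_eq_zero (hclc : CLC v) (hv : IsLlull v) (hab : a < b)
    (ht : v a b + v b a = 0) (hx : x ≠ a) : v a x = 0 := by
  refine le_antisymm ?_ (hv.nonneg_s18 hx.symm)
  rcases hx.lt_or_gt with hxa | hax
  · obtain ⟨p, hxp, hpa⟩ := exists_le_covBy_of_lt hxa
    have hpb : p < b := hpa.lt.trans hab
    have hap : v a p ≤ 0 := by
      linarith [hclc.turnout_sub_le_of_covBy hpa hpb.ne' hab.ne', hclc.up_left_le hpa.lt hab,
        hv.nonneg_s18 hpb.ne']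
    rcases hxp.eq_or_lt with rfl | hxp
    · exact hap
    · exact (hclc.down_le_left hxp hpa.lt).trans hap
  · exact ((hv.turnout_eq_zero_iff hax.ne).1 (hclc.turnout_eq_zero_of_lt hv hab ht hax)).1.le

lemma apply_right_eq_zero (hclc : CLC v) (hv : IsLlull v) (hab : a < b)
    (ht : v a b + v b a = 0) (hx : x ≠ b) : v b x = 0 := by
  obtain ⟨hab0, hba0⟩ := (hv.turnout_eq_zero_iff hab.ne).1 ht
  refine le_antisymm ?_ (hv.nonneg_s18 hx.symm)
  rcases lt_trichotomy x a with hxa | rfl | hax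
  · exact hba0 ▸ hclc.down_le_left hxa hab
  · exact hba0.le
  rcases hx.lt_or_gt with hxb | hbx
  · exact hab0 ▸ (hclc.le_of_lt hxb).trans (hclc.up_right_le hax hxb)
  · exact hclc.apply_left_eq_zero hv hab ht hax.ne' ▸ hclc.up_right_le hab hbx

lemma apply_eq_zero_of_turnout_eq_zero (hclc : CLC v) (hv : IsLlull v)
    (hab : a ≠ b) (ht : v a b + v b a = 0) (hx : x ≠ a) : v a x = 0 := by
  rcases hab.lt_or_gt with hab | hba
  · exact hclc.apply_left_eq_zero hv hab ht hx
  · exact hclc.apply_right_eq_zero hv hba (by linarith) hx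

end CLC

end

theorem stmt18_general {S : Type*} [LinearOrder S] [Fintype S]
    (v : S → S → ℝ) (hv : IsLlull v) (hclc : CLC v) :
    ∃ Y : Set S,
      (∀ x xb : S, x ∉ Y → xb ∉ Y → x ≠ xb → 0 < v x xb + v xb x) ∧
      (∀ y ∈ Y, ∀ x : S, x ≠ y → v y x = 0) := by
  refine ⟨{y | ∃ x, x ≠ y ∧ v x y + v y x = 0}, ?_, ?_⟩
  · intro x xb _ hxb hne
    exact (hv.turnout_nonneg hne).lt_of_ne' fun h => hxb ⟨x, hne, h⟩
  · rintro y ⟨x, hxy, ht⟩ z hzy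
    exact hclc.apply_eq_zero_of_turnout_eq_zero hv hxy.symm (by linarith) hzy

/-- If some turnout vanishes, there is a set `Y` such that turnouts are positive
off `Y` and `v y x = 0` for all `y ∈ Y`, `x ≠ y`. -/
theorem stmt18 {S : Type*} [LinearOrder S] [Fintype S]
    (v : S → S → ℝ) (hv : IsLlull v) (hclc : CLC v)
    (hz : ∃ x y : S, x ≠ y ∧ v x y + v y x = 0) :
    ∃ Y : Set S,
      (∀ x xb : S, x ∉ Y → xb ∉ Y → x ≠ xb → 0 < v x xb + v xb x) ∧
      (∀ y ∈ Y, ∀ x : S, x ≠ y → v y x = 0) :=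
  stmt18_general v hv hclc
end
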